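/- arXiv:2407.00883 — 5 statements merged into one kernel-verified Lean document; each statement's English description precedes it below -/
import Mathlib

section
/- Let Σ = (Γ, σ) be a signed graph, let λ ≥ 0 be an integer, and let δ ∈ {0,1} be congruent to λ modulo 2 (with the convention 0^0 = 1). Then the number f(Σ, λ) of proper C_λ-colourings of Σ satisfies f(Σ, λ) = Σ_{Y ⊆ E(Γ)} (−1)^{|Y|} · λ^{b(Σ|Y)} · δ^{c(Σ|Y) − b(Σ|Y)}. -/
open Finset

namespace SignedPaper

/-- The set of proper `C`-colourings of the signed graph `(G, σ)`:
functions `κ : V → C` with `κ v ≠ σ{v,w} * κ w` on every edge. -/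
def ProperColourings {V : Type*} (G : SimpleGraph V) (σ : Sym2 V → ℤ) (C : Finset ℤ) :
    Set (V → ℤ) :=
  {κ | (∀ v, κ v ∈ C) ∧ ∀ v w, G.Adj v w → κ v ≠ σ s(v, w) * κ w}

/-- The number of proper `C`-colourings of the signed graph `(G, σ)`. -/
noncomputable def properCount {V : Type*} (G : SimpleGraph V) (σ : Sym2 V → ℤ)
    (C : Finset ℤ) : ℕ :=
  (ProperColourings G σ C).ncard

/-- The `λ`-colour set `C_λ`. -/
noncomputable def colourSet (lam : ℕ) : Finset ℤ :=
  if Even lam then (Finset.Icc (-((lam : ℤ) / 2)) ((lam : ℤ) / 2)).erase 0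
  else Finset.Icc (-((lam : ℤ) / 2)) ((lam : ℤ) / 2)

/-- `f(Σ, λ)`: the number of proper `C_λ`-colourings. -/
noncomputable def signedCount {V : Type*} (G : SimpleGraph V) (σ : Sym2 V → ℤ) (lam : ℕ) : ℕ :=
  properCount G σ (colourSet lam)

/-- The spanning subgraph `Σ|Y` of `G` with edge set `Y`. -/
def restrict {V : Type*} (G : SimpleGraph V) (Y : Finset (Sym2 V)) : SimpleGraph V where
  Adj v w := G.Adj v w ∧ s(v, w) ∈ Y
  symm := ⟨fun v w h => ⟨h.1.symm, by rw [Sym2.eq_swap]; exact h.2⟩⟩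
  loopless := ⟨fun v h => G.loopless.irrefl v h.1⟩

/-- A signed graph is balanced if every cycle has sign product `1`
(equivalently, for `±1` signatures, an even number of negative edges). -/
def IsBalanced {V : Type*} (G : SimpleGraph V) (σ : Sym2 V → ℤ) : Prop :=
  ∀ (v : V) (w : G.Walk v v), w.IsCycle → (w.edges.map σ).prod = 1

/-- `c(Σ)`: the number of connected components. -/
noncomputable def numComponents {V : Type*} (G : SimpleGraph V) : ℕ :=
  Nat.card G.ConnectedComponent

/-- `b(Σ)`: the number of balanced connected components. -/
noncomputable def numBalancedComponents {V : Type*} (G : SimpleGraph V) (σ : Sym2 V → ℤ) : ℕ :=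
  Nat.card {c : G.ConnectedComponent //
    ∀ v : V, G.connectedComponentMk v = c →
      ∀ w : G.Walk v v, w.IsCycle → (w.edges.map σ).prod = 1}

/-- `p(Σ)`: the number of connected components all of whose edges are positive. -/
noncomputable def numPositiveComponents {V : Type*} (G : SimpleGraph V) (σ : Sym2 V → ℤ) : ℕ :=
  Nat.card {c : G.ConnectedComponent //
    ∀ v w : V, G.Adj v w → G.connectedComponentMk v = c → σ s(v, w) = 1}

/-- `(G₁, σ₁)` is switching isomorphic to `(G₂, σ₂)`: some sign-preserving isomorphism
onto a switching of `(G₂, σ₂)`. -/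
def SwitchIso {V₁ V₂ : Type*} (G₁ : SimpleGraph V₁) (σ₁ : Sym2 V₁ → ℤ)
    (G₂ : SimpleGraph V₂) (σ₂ : Sym2 V₂ → ℤ) : Prop :=
  ∃ (e : G₁ ≃g G₂) (X : V₂ → Bool), ∀ v w : V₁, G₁.Adj v w →
    σ₁ s(v, w) = (if X (e v) = X (e w) then 1 else -1) * σ₂ s(e v, e w)

end SignedPaper

section StmtAux

open SimpleGraph SignedPaper

variable {V : Type*}

private lemma sign_pm {H : SimpleGraph V} (σ : Sym2 V → ℤ)
    (hσ : ∀ e ∈ H.edgeSet, σ e = 1 ∨ σ e = -1) {u v : V} (p : H.Walk u v) :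
    (p.edges.map σ).prod = 1 ∨ (p.edges.map σ).prod = -1 := by
  induction p with
  | nil => simp
  | cons h p ih =>
    rw [Walk.edges_cons, List.map_cons, List.prod_cons]
    rcases hσ _ (H.mem_edgeSet.mpr h) with h1 | h1 <;> rcases ih with h2 | h2 <;>
      simp [h1, h2]

private lemma prop_walk {H : SimpleGraph V} (σ : Sym2 V → ℤ) {κ : V → ℤ}
    (hk : ∀ v w, H.Adj v w → κ v = σ s(v, w) * κ w) {u v : V} (p : H.Walk u v) :
    κ u = (p.edges.map σ).prod * κ v := by
  induction p with
  | nil => simp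
  | cons h p ih =>
    rw [Walk.edges_cons, List.map_cons, List.prod_cons, mul_assoc, ← ih]
    exact hk _ _ h

private lemma closed_walk_sign [DecidableEq V] {H : SimpleGraph V} (σ : Sym2 V → ℤ)
    (hσ : ∀ e ∈ H.edgeSet, σ e = 1 ∨ σ e = -1) (K : H.ConnectedComponent)
    (hb : ∀ v, H.connectedComponentMk v = K →
      ∀ w : H.Walk v v, w.IsCycle → (w.edges.map σ).prod = 1) :
    ∀ v, H.connectedComponentMk v = K → ∀ w : H.Walk v v, (w.edges.map σ).prod = 1 := by
  suffices h : ∀ n v, H.connectedComponentMk v = K →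
      ∀ w : H.Walk v v, w.length = n → (w.edges.map σ).prod = 1 by
    exact fun v hv w => h w.length v hv w rfl
  intro n
  induction n using Nat.strong_induction_on with
  | _ n IH =>
  intro v hv w hlen
  rcases Nat.eq_zero_or_pos n with hn | hn
  · subst hn
    have : w.Nil := Walk.nil_iff_length_eq.mpr hlen
    rw [this.eq_nil]
    simp
  by_cases hnd : w.support.tail.Nodup
  · -- no repeated vertex in the tail
    by_cases hcyc : w.IsCycle
    · exact hb v hv w hcyc
    · cases w with
      | nil => simp at hlen; omega
      | @cons _ u _ h p =>
        have hp : p.IsPath := by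
          rw [Walk.isPath_def]
          simpa using hnd
        by_cases he : s(v, u) ∈ p.edges
        · -- the edge occurs in the path, so p = edge back immediately
          cases p with
          | nil => simp at he
          | @cons _ x _ h2 p2 =>
            obtain ⟨hp2, hunotin⟩ := (Walk.cons_isPath_iff h2 p2).mp hp
            rw [Walk.edges_cons, List.mem_cons] at he
            rcases he with he | he
            · -- s(v,u) = s(u,x), hence x = v
              have hxv : x = v := by
                rw [Sym2.eq_iff] at he
                rcases he with ⟨h1, h2'⟩ | ⟨h1, h2'⟩
                · exact absurd h1 h.ne
                · exact h1.symm
              subst hxv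
              have hnil : p2 = Walk.nil := by
                have := SimpleGraph.Path.loop_eq ⟨p2, hp2⟩
                exact congrArg Subtype.val this
              subst hnil
              simp only [Walk.edges_cons, Walk.edges_nil, List.map_cons, List.map_nil,
                List.prod_cons, List.prod_nil, mul_one]
              rw [Sym2.eq_swap]
              rcases hσ _ (H.mem_edgeSet.mpr h.symm) with h1 | h1 <;> rw [h1] <;> norm_num
            · exact absurd (Walk.snd_mem_support_of_mem_edges p2 he) hunotin
        · -- otherwise cons h p is a cycle
          exact absurd (SimpleGraph.Path.cons_isCycle ⟨p, hp⟩ h he) hcyc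
  · -- a repeated vertex: rotate and split
    obtain ⟨u0, hdup⟩ := List.exists_duplicate_iff_not_nodup.mpr hnd
    have hcount : 2 ≤ w.support.tail.count u0 := List.duplicate_iff_two_le_count.mp hdup
    have hu0 : u0 ∈ w.support := List.mem_of_mem_tail hdup.mem
    have hu0K : H.connectedComponentMk u0 = K := by
      have : H.Reachable v u0 := ⟨w.takeUntil u0 hu0⟩
      exact (ConnectedComponent.sound this).symm.trans hv
    set w' := w.rotate u0 hu0 with hw'
    have hperm : w'.edges.Perm w.edges := (w.rotate_edges u0 hu0).perm
    have hprodeq : (w'.edges.map σ).prod = (w.edges.map σ).prod := (hperm.map σ).prod_eq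
    have hlen' : w'.length = n := by
      rw [← Walk.length_edges, hperm.length_eq, Walk.length_edges, hlen]
    have hcount' : 2 ≤ w'.support.tail.count u0 := by
      rw [(w.support_rotate u0 hu0).perm.count_eq]
      exact hcount
    rw [← hprodeq]
    cases hw'' : w' with
    | nil => rw [hw''] at hlen'; simp at hlen'; omega
    | @cons _ x _ h' p' =>
      rw [hw''] at hcount' hlen'
      have hcntp : 2 ≤ p'.support.count u0 := by
        simpa [Walk.support_cons] using hcount'
      have hu0p' : u0 ∈ p'.support := List.count_pos_iff.mp (by omega)
      set q := p'.takeUntil u0 hu0p' with hq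
      set r := p'.dropUntil u0 hu0p' with hr
      have hspec : q.append r = p' := p'.take_spec hu0p'
      have hq1 : q.support.count u0 = 1 := p'.count_support_takeUntil_eq_one hu0p'
      have hrlen : 1 ≤ r.length := by
        by_contra hcon
        have : r.length = 0 := by omega
        have hrnil : r = Walk.nil := (Walk.nil_iff_length_eq.mpr this).eq_nil
        have hsupp : p'.support = q.support ++ r.support.tail := by
          rw [← hspec, Walk.support_append]
        rw [hsupp, List.count_append, hq1, hrnil] at hcntp
        simp at hcntp
      have hlenq : q.length + r.length = p'.length := by
        rw [← hspec, Walk.length_append]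
      have hlencons : p'.length + 1 = n := by
        simpa [Walk.length_cons] using hlen'
      -- two shorter closed walks at u0
      have hA : ((Walk.cons h' q).edges.map σ).prod = 1 :=
        IH (q.length + 1) (by omega) u0 hu0K (Walk.cons h' q) (by simp [Walk.length_cons])
      have hB : ((r.edges.map σ).prod) = 1 :=
        IH r.length (by omega) u0 hu0K r rfl
      calc ((Walk.cons h' p').edges.map σ).prod
          = ((Walk.cons h' q).edges.map σ).prod * (r.edges.map σ).prod := by
            rw [← hspec]
            simp [Walk.edges_cons, Walk.edges_append, mul_assoc]
        _ = 1 := by rw [hA, hB, mul_one]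

private lemma count_lemma [Fintype V] [DecidableEq V] (H : SimpleGraph V) (σ : Sym2 V → ℤ)
    (hσ : ∀ e ∈ H.edgeSet, σ e = 1 ∨ σ e = -1) (C : Finset ℤ)
    (hCneg : ∀ c ∈ C, -c ∈ C) :
    Nat.card {κ : V → ℤ // (∀ v, κ v ∈ C) ∧ ∀ v w, H.Adj v w → κ v = σ s(v, w) * κ w}
      = C.card ^ (numBalancedComponents H σ) *
        (if (0:ℤ) ∈ C then 1 else 0) ^
          (numComponents H - numBalancedComponents H σ) := by
  classical
  set Bal : H.ConnectedComponent → Prop := fun K =>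
    ∀ v, H.connectedComponentMk v = K →
      ∀ w : H.Walk v v, w.IsCycle → (w.edges.map σ).prod = 1 with hBalDef
  have hreach : ∀ v : V, H.Reachable (Quot.out (H.connectedComponentMk v)) v := fun v =>
    ConnectedComponent.exact (Quot.out_eq (H.connectedComponentMk v))
  set pick : (v : V) → H.Walk (Quot.out (H.connectedComponentMk v)) v :=
    fun v => (hreach v).some with hpick
  set sgn : V → ℤ := fun v => (((pick v).edges.map σ).prod) with hsgn
  have hsgnpm : ∀ v, sgn v = 1 ∨ sgn v = -1 := fun v => sign_pm σ hσ (pick v)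
  have hsgnsq : ∀ v, sgn v * sgn v = 1 := by
    intro v; rcases hsgnpm v with h | h <;> rw [h] <;> norm_num
  -- the equivalence with a product over components
  have e1 : {κ : V → ℤ // (∀ v, κ v ∈ C) ∧ ∀ v w, H.Adj v w → κ v = σ s(v, w) * κ w}
      ≃ {f : H.ConnectedComponent → ℤ // ∀ K, f K ∈ C ∧ (¬ Bal K → f K = 0)} := by
    refine
      { toFun := fun κ => ⟨fun K => κ.1 (Quot.out K), ?_⟩
        invFun := fun f => ⟨fun v => sgn v * f.1 (H.connectedComponentMk v), ?_⟩
        left_inv := ?_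
        right_inv := ?_ }
    · -- membership for the forward map
      intro K
      refine ⟨κ.2.1 _, ?_⟩
      intro hnb
      have hnb' : ∃ v, H.connectedComponentMk v = K ∧
          ∃ w : H.Walk v v, w.IsCycle ∧ (w.edges.map σ).prod ≠ 1 := by
        by_contra hcon
        push_neg at hcon
        exact hnb (fun v hv w hw => hcon v hv w hw)
      obtain ⟨v, hvK, w, hwc, hwne⟩ := hnb'
      have hw1 : (w.edges.map σ).prod = -1 := (sign_pm σ hσ w).resolve_left hwne
      have hv0 : κ.1 v = 0 := by
        have := prop_walk σ κ.2.2 w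
        rw [hw1] at this
        linarith
      have hre : H.Reachable (Quot.out K) v :=
        ConnectedComponent.exact ((Quot.out_eq K).trans hvK.symm)
      have := prop_walk σ κ.2.2 hre.some
      rw [hv0, mul_zero] at this
      exact this
    · -- membership for the inverse map
      constructor
      · intro v
        show sgn v * f.1 (H.connectedComponentMk v) ∈ C
        rcases hsgnpm v with h | h <;> rw [h]
        · simpa using (f.2 (H.connectedComponentMk v)).1
        · simpa using hCneg _ (f.2 (H.connectedComponentMk v)).1
      · intro v w hvw
        show sgn v * f.1 (H.connectedComponentMk v) = σ s(v, w) * (sgn w * f.1 (H.connectedComponentMk w))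
        have hK : H.connectedComponentMk w = H.connectedComponentMk v :=
          (ConnectedComponent.connectedComponentMk_eq_of_adj hvw).symm
        rw [hK]
        by_cases hf : f.1 (H.connectedComponentMk v) = 0
        · rw [hf]; ring
        · have hBalv : Bal (H.connectedComponentMk v) := by
            by_contra hc
            exact hf ((f.2 _).2 hc)
          -- closed walk: pick v, then edge v-w, then (pick w).reverse
          have hout : Quot.out (H.connectedComponentMk w) = Quot.out (H.connectedComponentMk v) :=
            congrArg Quot.out hK
          set W : H.Walk (Quot.out (H.connectedComponentMk v)) (Quot.out (H.connectedComponentMk v)) :=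
            (pick v).append ((Walk.cons hvw ((pick w).reverse)).copy rfl hout) with hW
          have hmkout : H.connectedComponentMk (Quot.out (H.connectedComponentMk v))
              = H.connectedComponentMk v := Quot.out_eq _
          have h1 : ((W.edges.map σ).prod) = 1 :=
            closed_walk_sign σ hσ (H.connectedComponentMk v) hBalv _ hmkout W
          have h2 : sgn v * (σ s(v, w) * sgn w) = 1 := by
            rw [hW] at h1
            rw [Walk.edges_append, Walk.edges_copy, Walk.edges_cons, Walk.edges_reverse] at h1
            rw [List.map_append, List.prod_append, List.map_cons, List.prod_cons,
              List.map_reverse, List.prod_reverse] at h1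
            exact h1
          rcases hsgnpm v with hs1 | hs1 <;> rcases hsgnpm w with hs2 | hs2 <;>
            rcases hσ _ (H.mem_edgeSet.mpr hvw) with hs3 | hs3 <;>
            rw [hs1, hs2, hs3] at h2 ⊢ <;> first | ring1 | norm_num at h2
    · -- left inverse
      intro κ
      apply Subtype.ext
      funext v
      have := prop_walk σ κ.2.2 (pick v)
      simp only
      rw [this, ← mul_assoc, hsgnsq v, one_mul]
    · -- right inverse
      intro f
      apply Subtype.ext
      funext K
      simp only
      have hK : H.connectedComponentMk (Quot.out K) = K := Quot.out_eq K
      rw [hK]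
      by_cases hf : f.1 K = 0
      · rw [hf]; ring
      · have hBalK : Bal K := by
          by_contra hc
          exact hf ((f.2 K).2 hc)
        have hout : Quot.out (H.connectedComponentMk (Quot.out K)) = Quot.out K :=
          congrArg Quot.out hK
        have h1 : ((((pick (Quot.out K)).copy hout rfl).edges.map σ).prod) = 1 :=
          closed_walk_sign σ hσ K hBalK _ hK _
        rw [Walk.edges_copy] at h1
        rw [show sgn (Quot.out K) = 1 from h1, one_mul]
  have e2 : {f : H.ConnectedComponent → ℤ // ∀ K, f K ∈ C ∧ (¬ Bal K → f K = 0)}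
      ≃ ∀ K : H.ConnectedComponent, {x : ℤ // x ∈ C ∧ (¬ Bal K → x = 0)} :=
    { toFun := fun f K => ⟨f.1 K, f.2 K⟩
      invFun := fun g => ⟨fun K => (g K).1, fun K => (g K).2⟩
      left_inv := fun f => rfl
      right_inv := fun g => rfl }
  letI : Fintype H.ConnectedComponent := Fintype.ofFinite _
  have hcardK : ∀ K : H.ConnectedComponent,
      Nat.card {x : ℤ // x ∈ C ∧ (¬ Bal K → x = 0)}
        = if Bal K then C.card else (if (0:ℤ) ∈ C then 1 else 0) := by
    intro K
    by_cases hB : Bal K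
    · rw [if_pos hB]
      have e3 : {x : ℤ // x ∈ C ∧ (¬ Bal K → x = 0)} ≃ {x : ℤ // x ∈ C} :=
        Equiv.subtypeEquivRight (fun x => ⟨fun h => h.1, fun h => ⟨h, fun hc => absurd hB hc⟩⟩)
      rw [Nat.card_congr e3, Nat.card_eq_fintype_card]
      exact Fintype.card_coe C
    · rw [if_neg hB]
      by_cases h0 : (0:ℤ) ∈ C
      · rw [if_pos h0]
        haveI : Unique {x : ℤ // x ∈ C ∧ (¬ Bal K → x = 0)} :=
          { default := ⟨0, h0, fun _ => rfl⟩
            uniq := fun x => Subtype.ext (x.2.2 hB) }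
        exact Nat.card_unique
      · rw [if_neg h0]
        haveI : IsEmpty {x : ℤ // x ∈ C ∧ (¬ Bal K → x = 0)} :=
          ⟨fun x => h0 (x.2.2 hB ▸ x.2.1)⟩
        exact Nat.card_of_isEmpty
  have hmain : Nat.card {κ : V → ℤ // (∀ v, κ v ∈ C) ∧
      ∀ v w, H.Adj v w → κ v = σ s(v, w) * κ w}
      = ∏ K : H.ConnectedComponent, (if Bal K then C.card else (if (0:ℤ) ∈ C then 1 else 0)) := by
    rw [Nat.card_congr (e1.trans e2), Nat.card_pi]
    exact Finset.prod_congr rfl (fun K _ => hcardK K)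
  rw [hmain, Finset.prod_ite, Finset.prod_const, Finset.prod_const]
  have hb : numBalancedComponents H σ = (univ.filter Bal).card := by
    rw [numBalancedComponents, Nat.card_eq_fintype_card]
    exact Fintype.card_subtype _
  have hc : numComponents H = Fintype.card H.ConnectedComponent := by
    rw [numComponents, Nat.card_eq_fintype_card]
  have hsplit : #(univ.filter Bal) + #(univ.filter (fun a => ¬ Bal a))
      = #(univ : Finset H.ConnectedComponent) :=
    Finset.card_filter_add_card_filter_not Bal
  have hu : #(univ : Finset H.ConnectedComponent) = Fintype.card H.ConnectedComponent :=
    Finset.card_univ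
  have hexp : #(Finset.filter (fun a => ¬ Bal a) univ)
      = Fintype.card H.ConnectedComponent - #(Finset.filter Bal univ) := by clear * - hsplit hu; omega
  rw [hb, hc, hexp]

end StmtAux

open SignedPaper Finset in
/-- inclusion–exclusion formula for the number of proper
`C_λ`-colourings of a signed graph. -/
theorem stmt_0 {V : Type*} [Fintype V] [DecidableEq V]
    (G : SimpleGraph V) [DecidableRel G.Adj] (σ : Sym2 V → ℤ)
    (hσ : ∀ e ∈ G.edgeSet, σ e = 1 ∨ σ e = -1)
    (lam : ℕ) (δ : ℤ) (hδ01 : δ = 0 ∨ δ = 1) (hδ : δ % 2 = (lam : ℤ) % 2) :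
    (signedCount G σ lam : ℤ) =
      ∑ Y ∈ G.edgeFinset.powerset, (-1 : ℤ) ^ Y.card *
        (lam : ℤ) ^ (numBalancedComponents (restrict G Y) σ) *
        δ ^ (numComponents (restrict G Y) - numBalancedComponents (restrict G Y) σ) := by
  classical
  set C : Finset ℤ := colourSet lam with hC
  -- basic facts about the colour set
  have hdvd : (0:ℤ) ≤ (lam : ℤ) / 2 := Int.ediv_nonneg (by positivity) (by norm_num)
  have hCcard : C.card = lam := by
    rw [hC, colourSet]
    by_cases he : Even lam
    · rw [if_pos he]
      have h0 : (0:ℤ) ∈ Finset.Icc (-((lam : ℤ) / 2)) ((lam : ℤ) / 2) := by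
        rw [Finset.mem_Icc]; omega
      rw [Finset.card_erase_of_mem h0, Int.card_Icc]
      obtain ⟨k, hk⟩ := he
      omega
    · rw [if_neg he, Int.card_Icc]
      have : lam % 2 = 1 := Nat.odd_iff.mp (Nat.not_even_iff_odd.mp he)
      omega
  have hCneg : ∀ c ∈ C, -c ∈ C := by
    intro c hc
    rw [hC, colourSet] at hc ⊢
    by_cases he : Even lam
    · rw [if_pos he] at hc ⊢
      rw [Finset.mem_erase, Finset.mem_Icc] at hc ⊢
      omega
    · rw [if_neg he] at hc ⊢
      rw [Finset.mem_Icc] at hc ⊢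
      omega
  have h0iff : ((0:ℤ) ∈ C) ↔ ¬ Even lam := by
    rw [hC, colourSet]
    by_cases he : Even lam
    · rw [if_pos he]
      simp [he]
    · rw [if_neg he]
      rw [Finset.mem_Icc]
      constructor
      · intro _; exact he
      · intro _; omega
  have hdelta : δ = if (0:ℤ) ∈ C then (1:ℤ) else 0 := by
    have hlamp : Even lam ↔ (lam : ℤ) % 2 = 0 := by
      rw [Int.even_iff.symm, Int.even_coe_nat]
    rcases hδ01 with h | h <;> subst h
    · rw [if_neg]
      rw [h0iff]
      simp only [not_not]
      rw [hlamp]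
      omega
    · rw [if_pos]
      rw [h0iff, hlamp]
      omega
  -- the finset of all colourings with values in C
  set P : Finset (V → ℤ) := Fintype.piFinset (fun _ : V => C) with hP
  -- Step A : signedCount as a finset cardinality
  have hstepA : signedCount G σ lam
      = (P.filter (fun κ => ∀ v w, G.Adj v w → κ v ≠ σ s(v, w) * κ w)).card := by
    rw [signedCount, properCount]
    have hset : ProperColourings G σ C
        = ↑(P.filter (fun κ => ∀ v w, G.Adj v w → κ v ≠ σ s(v, w) * κ w)) := by
      ext κ
      simp only [ProperColourings, Set.mem_setOf_eq, Finset.coe_filter, hP,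
        Fintype.mem_piFinset]
    rw [hset, Set.ncard_coe_finset]
  -- Step C : the cardinality count for each subset Y of edges
  have hstepC : ∀ Y ∈ G.edgeFinset.powerset,
      (((P.filter (fun κ => ∀ v w, G.Adj v w → s(v, w) ∈ Y → κ v = σ s(v, w) * κ w)).card : ℤ))
      = (lam : ℤ) ^ (numBalancedComponents (restrict G Y) σ) *
        δ ^ (numComponents (restrict G Y) - numBalancedComponents (restrict G Y) σ) := by
    intro Y hY
    have hσH : ∀ e ∈ (restrict G Y).edgeSet, σ e = 1 ∨ σ e = -1 := by
      intro e he
      refine hσ e ?_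
      induction e using Sym2.ind with
      | _ a b =>
        rw [SimpleGraph.mem_edgeSet] at he ⊢
        exact he.1
    have hcount := count_lemma (restrict G Y) σ hσH C hCneg
    have e0 : {κ // κ ∈ P.filter (fun κ => ∀ v w, G.Adj v w → s(v, w) ∈ Y → κ v = σ s(v, w) * κ w)}
        ≃ {κ : V → ℤ // (∀ v, κ v ∈ C) ∧
            ∀ v w, (restrict G Y).Adj v w → κ v = σ s(v, w) * κ w} :=
      Equiv.subtypeEquivRight (fun κ => by
        simp only [Finset.mem_filter, hP, Fintype.mem_piFinset]
        constructor
        · rintro ⟨h1, h2⟩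
          exact ⟨h1, fun v w hvw => h2 v w hvw.1 hvw.2⟩
        · rintro ⟨h1, h2⟩
          exact ⟨h1, fun v w ha hm => h2 v w ⟨ha, hm⟩⟩)
    have hcard : (P.filter (fun κ => ∀ v w, G.Adj v w → s(v, w) ∈ Y → κ v = σ s(v, w) * κ w)).card
        = C.card ^ (numBalancedComponents (restrict G Y) σ) *
          (if (0:ℤ) ∈ C then 1 else 0) ^
            (numComponents (restrict G Y) - numBalancedComponents (restrict G Y) σ) := by
      rw [← Fintype.card_coe, ← Nat.card_eq_fintype_card, Nat.card_congr e0, hcount]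
    rw [hcard]
    push_cast
    rw [hCcard, hdelta]
  -- Step B : inclusion-exclusion
  have hIE : ∑ Y ∈ G.edgeFinset.powerset, (-1 : ℤ) ^ Y.card *
        ((P.filter (fun κ => ∀ v w, G.Adj v w → s(v, w) ∈ Y → κ v = σ s(v, w) * κ w)).card : ℤ)
      = ((P.filter (fun κ => ∀ v w, G.Adj v w → κ v ≠ σ s(v, w) * κ w)).card : ℤ) := by
    have hbadof : ∀ (κ : V → ℤ) (v w : V), G.Adj v w → κ v = σ s(v, w) * κ w →
        ∀ a b : V, s(v, w) = s(a, b) → κ a = σ s(v, w) * κ b := by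
      intro κ v w hadj heq a b hab
      have hsq := hσ _ (G.mem_edgeSet.mpr hadj)
      rw [Sym2.eq_iff] at hab
      rcases hab with ⟨h1, h2⟩ | ⟨h1, h2⟩
      · subst h1; subst h2; exact heq
      · subst h1; subst h2
        rcases hsq with h | h <;> rw [h] at heq ⊢ <;> linarith
    have h1 : ∀ Y ∈ G.edgeFinset.powerset, (-1 : ℤ) ^ Y.card *
          ((P.filter (fun κ => ∀ v w, G.Adj v w → s(v, w) ∈ Y → κ v = σ s(v, w) * κ w)).card : ℤ)
        = ∑ κ ∈ P, (if (∀ v w, G.Adj v w → s(v, w) ∈ Y → κ v = σ s(v, w) * κ w)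
            then (-1 : ℤ) ^ Y.card else 0) := by
      intro Y _
      rw [Finset.card_filter]
      push_cast
      rw [Finset.mul_sum]
      exact Finset.sum_congr rfl fun κ _ => by
        by_cases h : (∀ v w, G.Adj v w → s(v, w) ∈ Y → κ v = σ s(v, w) * κ w) <;> simp [h]
    rw [Finset.sum_congr rfl h1, Finset.sum_comm]
    have h2 : ∀ κ ∈ P,
        (∑ Y ∈ G.edgeFinset.powerset,
          if (∀ v w, G.Adj v w → s(v, w) ∈ Y → κ v = σ s(v, w) * κ w)
            then (-1 : ℤ) ^ Y.card else 0)
        = if (∀ v w, G.Adj v w → κ v ≠ σ s(v, w) * κ w) then 1 else 0 := by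
      intro κ _
      set B : Finset (Sym2 V) :=
        G.edgeFinset.filter (fun e => ∀ a b : V, e = s(a, b) → κ a = σ e * κ b) with hB
      have hYiff : ∀ Y ∈ G.edgeFinset.powerset,
          ((∀ v w, G.Adj v w → s(v, w) ∈ Y → κ v = σ s(v, w) * κ w) ↔ Y ⊆ B) := by
        intro Y hY
        rw [Finset.mem_powerset] at hY
        constructor
        · intro hp e he
          rw [hB, Finset.mem_filter]
          refine ⟨hY he, ?_⟩
          have hee := hY he
          rw [SimpleGraph.mem_edgeFinset] at hee
          induction e using Sym2.ind with
          | _ x y =>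
            have hadj : G.Adj x y := (SimpleGraph.mem_edgeSet G).mp hee
            exact hbadof κ x y hadj (hp x y hadj he)
        · intro hsub v w hadj hmem
          have hmm := hsub hmem
          rw [hB, Finset.mem_filter] at hmm
          exact hmm.2 v w rfl
      rw [Finset.sum_congr rfl (fun Y hY => if_congr (hYiff Y hY) rfl rfl)]
      rw [← Finset.sum_filter]
      have hpb : (G.edgeFinset.powerset.filter (fun Y => Y ⊆ B)) = B.powerset := by
        ext Z
        simp only [Finset.mem_filter, Finset.mem_powerset]
        exact ⟨fun h => h.2, fun h => ⟨h.trans (Finset.filter_subset _ _), h⟩⟩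
      rw [hpb, Finset.sum_powerset_neg_one_pow_card]
      have hiff : B = ∅ ↔ (∀ v w, G.Adj v w → κ v ≠ σ s(v, w) * κ w) := by
        rw [hB, Finset.filter_eq_empty_iff]
        constructor
        · intro h v w hadj heq
          exact h (SimpleGraph.mem_edgeFinset.mpr (G.mem_edgeSet.mpr hadj))
            (hbadof κ v w hadj heq)
        · intro h e hee hbad
          rw [SimpleGraph.mem_edgeFinset] at hee
          induction e using Sym2.ind with
          | _ x y =>
            have hadj : G.Adj x y := (SimpleGraph.mem_edgeSet G).mp hee
            exact h x y hadj (hbad x y rfl)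
      rw [if_congr hiff rfl rfl]
    rw [Finset.sum_congr rfl h2, Finset.sum_boole]
  rw [hstepA, ← hIE]
  refine Finset.sum_congr rfl fun Y hY => ?_
  rw [hstepC Y hY]
  ring
end

section
/- There exist unbalanced signed graphs Σ₁ and Σ₂ (each on 6 vertices) whose underlying graphs are not isomorphic, such that f(Σ₁, λ) = f(Σ₂, λ) for every integer λ ≥ 0; their common counting function is given by x(x−1)(x−2)²(x²−3x+3) at even λ and (x−1)⁴(x−2)² at odd λ. -/
open Finset

namespace SignedAux

set_option linter.unusedSectionVars false

/-! ### Generic summation helpers -/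

lemma sum_ite_and_left {α : Type*} (s : Finset α) (P : Prop) [Decidable P] (g : α → Prop)
    [DecidablePred g] (v : α → ℕ) :
    (∑ x ∈ s, if P ∧ g x then v x else 0) = if P then (∑ x ∈ s, if g x then v x else 0) else 0 := by
  split_ifs with h
  · exact Finset.sum_congr rfl fun x _ => by simp [h]
  · exact Finset.sum_eq_zero fun x _ => by simp [h]

lemma sum_ite_const {α : Type*} (s : Finset α) (g : α → Prop) [DecidablePred g] (K : ℕ) :
    (∑ x ∈ s, if g x then K else 0) = (s.filter g).card * K := by
  rw [← Finset.sum_filter, Finset.sum_const, smul_eq_mul]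

lemma sum_ite_congr {α : Type*} (s : Finset α) (g : α → Prop) [DecidablePred g] (v v' : α → ℕ)
    (h : ∀ x ∈ s, g x → v x = v' x) :
    (∑ x ∈ s, if g x then v x else 0) = (∑ x ∈ s, if g x then v' x else 0) :=
  Finset.sum_congr rfl fun x hx => by
    by_cases hg : g x
    · simp only [if_pos hg, h x hx hg]
    · simp [hg]

lemma filter_ne_two {α : Type*} [DecidableEq α] (s : Finset α) (c d : α) :
    s.filter (fun x => c ≠ x ∧ d ≠ x) = (s.erase c).erase d := by
  ext x; simp [mem_erase, and_comm]; tauto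

lemma card_erase_two {α : Type*} [DecidableEq α] {s : Finset α} {c d : α}
    (hc : c ∈ s) (hd : d ∈ s) (hcd : c ≠ d) :
    ((s.erase c).erase d).card = s.card - 2 := by
  rw [Finset.card_erase_of_mem (by simp [mem_erase, hd, hcd.symm]),
    Finset.card_erase_of_mem hc]
  omega

lemma sum_if_eq {α : Type*} [DecidableEq α] (s : Finset α) (a : α) (X Y : ℕ) :
    (∑ b ∈ s, if b = a then X else Y) = (if a ∈ s then X + (s.card - 1) * Y else s.card * Y) := by
  split_ifs with h
  · rw [← Finset.insert_erase h, Finset.sum_insert (Finset.notMem_erase a s), if_pos rfl]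
    have hc : ∀ b ∈ s.erase a, (if b = a then X else Y) = Y := fun b hb => by
      simp [Finset.ne_of_mem_erase hb]
    rw [Finset.sum_congr rfl hc, Finset.sum_const, smul_eq_mul,
      Finset.card_erase_of_mem h, Finset.insert_erase h]
  · have hc : ∀ b ∈ s, (if b = a then X else Y) = Y := fun b hb => by
      rw [if_neg]; rintro rfl; exact h hb
    rw [Finset.sum_congr rfl hc, Finset.sum_const, smul_eq_mul]

/-! ### The closed form -/

def W (n : ℕ) : ℕ := (n - 2) * ((n - 2) * (n - 1))

def X0 (n : ℕ) : ℕ := (n - 1) * W n + (n - 2) * ((n - 2) * W n)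

def Y0 (n : ℕ) : ℕ := (n - 1) * ((n - 2) * W n)

def closedF (C : Finset ℤ) : ℕ :=
  if (0:ℤ) ∈ C then Y0 C.card + (C.card - 1) * X0 C.card else C.card * X0 C.card

/-! ### The two hexa-sums -/

lemma common_tail (C : Finset ℤ) (hsym : ∀ a ∈ C, -a ∈ C)
    (v : ℤ → ℤ → ℤ → ℕ)
    (hv : ∀ a ∈ C, ∀ b ∈ C, ∀ c ∈ C, (a ≠ c ∧ b ≠ c) → v a b c = W C.card) :
    (∑ a ∈ C, ∑ b ∈ C, ∑ c ∈ C, if a ≠ -b ∧ a ≠ c ∧ b ≠ c then v a b c else 0)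
      = closedF C := by
  set n := C.card with hn
  have h2 : ∀ a ∈ C, (∑ b ∈ C, ∑ c ∈ C, if a ≠ -b ∧ a ≠ c ∧ b ≠ c then v a b c else 0)
      = if a = 0 then Y0 n else X0 n := by
    intro a ha
    have h3 : ∀ b ∈ C, (∑ c ∈ C, if a ≠ -b ∧ a ≠ c ∧ b ≠ c then v a b c else 0)
        = if a ≠ -b then ((C.erase a).erase b).card * W n else 0 := by
      intro b hb
      have e1 : (∑ c ∈ C, if a ≠ -b ∧ a ≠ c ∧ b ≠ c then v a b c else 0)
          = if a ≠ -b then (∑ c ∈ C, if a ≠ c ∧ b ≠ c then v a b c else 0) else 0 :=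
        sum_ite_and_left C (a ≠ -b) (fun c => a ≠ c ∧ b ≠ c) (v a b)
      rw [e1]
      rw [sum_ite_congr C (fun c => a ≠ c ∧ b ≠ c) (v a b) (fun _ => W n)
        (fun c hc hg => hv a ha b hb c hc hg)]
      rw [sum_ite_const, filter_ne_two]
    rw [Finset.sum_congr rfl h3]
    have e2 : ∀ b ∈ C, (if a ≠ -b then ((C.erase a).erase b).card * W n else 0)
        = if b ≠ -a then ((C.erase a).erase b).card * W n else 0 := by
      intro b _
      congr 1
      exact propext ⟨fun h hb => h (by omega), fun h hb => h (by omega)⟩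
    rw [Finset.sum_congr rfl e2, ← Finset.sum_filter, Finset.filter_ne']
    have e3 : ∀ b ∈ C.erase (-a), ((C.erase a).erase b).card * W n
        = if b = a then (n - 1) * W n else (n - 2) * W n := by
      intro b hb
      by_cases hba : b = a
      · subst hba
        rw [if_pos rfl, Finset.erase_idem, Finset.card_erase_of_mem ha]
      · rw [if_neg hba, card_erase_two ha (Finset.mem_of_mem_erase hb) (Ne.symm hba)]
    rw [Finset.sum_congr rfl e3, sum_if_eq]
    have hcard : (C.erase (-a)).card = n - 1 := Finset.card_erase_of_mem (hsym a ha)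
    by_cases h0 : a = 0
    · subst h0
      rw [if_neg (by simp), if_pos rfl, hcard, Y0]
    · rw [if_pos (Finset.mem_erase.mpr ⟨by omega, ha⟩), if_neg h0, hcard, X0,
        show n - 1 - 1 = n - 2 from rfl]
  rw [Finset.sum_congr rfl h2, sum_if_eq, closedF]

lemma hexa1 (C : Finset ℤ) (hsym : ∀ a ∈ C, -a ∈ C) :
    (∑ a ∈ C, ∑ b ∈ C, ∑ c ∈ C, ∑ d ∈ C, ∑ e ∈ C, ∑ f ∈ C,
      if (((a ≠ -b ∧ a ≠ c ∧ b ≠ c) ∧ (b ≠ d ∧ c ≠ d)) ∧ (c ≠ e ∧ d ≠ e)) ∧ a ≠ f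
      then (1:ℕ) else 0) = closedF C := by
  have hf : ∀ (X : Prop) (_ : Decidable X) (a : ℤ), a ∈ C →
      (∑ f ∈ C, if X ∧ a ≠ f then (1:ℕ) else 0) = if X then C.card - 1 else 0 := by
    intro X _ a ha
    rw [sum_ite_and_left, sum_ite_const, Finset.filter_ne, Finset.card_erase_of_mem ha, mul_one]
  have key : ∀ a ∈ C, ∀ b ∈ C, ∀ c ∈ C,
      (∑ d ∈ C, ∑ e ∈ C, ∑ f ∈ C,
        if (((a ≠ -b ∧ a ≠ c ∧ b ≠ c) ∧ (b ≠ d ∧ c ≠ d)) ∧ (c ≠ e ∧ d ≠ e)) ∧ a ≠ f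
        then (1:ℕ) else 0)
      = if a ≠ -b ∧ a ≠ c ∧ b ≠ c
          then ((C.erase b).erase c).card * ((C.card - 2) * (C.card - 1)) else 0 := by
    intro a ha b hb c hc
    have h5 : ∀ d ∈ C, (∑ e ∈ C, ∑ f ∈ C,
        if (((a ≠ -b ∧ a ≠ c ∧ b ≠ c) ∧ (b ≠ d ∧ c ≠ d)) ∧ (c ≠ e ∧ d ≠ e)) ∧ a ≠ f
        then (1:ℕ) else 0)
        = if (a ≠ -b ∧ a ≠ c ∧ b ≠ c) ∧ (b ≠ d ∧ c ≠ d)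
            then ((C.erase c).erase d).card * (C.card - 1) else 0 := by
      intro d hd
      rw [Finset.sum_congr rfl (fun e _ => hf _ _ a ha),
        sum_ite_and_left C ((a ≠ -b ∧ a ≠ c ∧ b ≠ c) ∧ (b ≠ d ∧ c ≠ d))
          (fun e => c ≠ e ∧ d ≠ e) (fun _ => C.card - 1),
        sum_ite_const, filter_ne_two]
    rw [Finset.sum_congr rfl h5,
      sum_ite_and_left C (a ≠ -b ∧ a ≠ c ∧ b ≠ c) (fun d => b ≠ d ∧ c ≠ d)
        (fun d => ((C.erase c).erase d).card * (C.card - 1)),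
      sum_ite_congr C _ _ (fun _ => (C.card - 2) * (C.card - 1))
        (fun d hd hg => by rw [card_erase_two hc hd hg.2]),
      sum_ite_const, filter_ne_two]
  rw [Finset.sum_congr rfl (fun a ha => Finset.sum_congr rfl fun b hb =>
    Finset.sum_congr rfl fun c hc => key a ha b hb c hc)]
  exact common_tail C hsym _ (fun a ha b hb c hc hg => by
    rw [card_erase_two hb hc hg.2]; rfl)

lemma hexa2 (C : Finset ℤ) (hsym : ∀ a ∈ C, -a ∈ C) :
    (∑ a ∈ C, ∑ b ∈ C, ∑ c ∈ C, ∑ d ∈ C, ∑ e ∈ C, ∑ f ∈ C,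
      if (((a ≠ -b ∧ a ≠ c ∧ b ≠ c) ∧ (b ≠ d ∧ c ≠ d)) ∧ (b ≠ e ∧ c ≠ e)) ∧ a ≠ f
      then (1:ℕ) else 0) = closedF C := by
  have hf : ∀ (X : Prop) (_ : Decidable X) (a : ℤ), a ∈ C →
      (∑ f ∈ C, if X ∧ a ≠ f then (1:ℕ) else 0) = if X then C.card - 1 else 0 := by
    intro X _ a ha
    rw [sum_ite_and_left, sum_ite_const, Finset.filter_ne, Finset.card_erase_of_mem ha, mul_one]
  have key : ∀ a ∈ C, ∀ b ∈ C, ∀ c ∈ C,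
      (∑ d ∈ C, ∑ e ∈ C, ∑ f ∈ C,
        if (((a ≠ -b ∧ a ≠ c ∧ b ≠ c) ∧ (b ≠ d ∧ c ≠ d)) ∧ (b ≠ e ∧ c ≠ e)) ∧ a ≠ f
        then (1:ℕ) else 0)
      = if a ≠ -b ∧ a ≠ c ∧ b ≠ c
          then ((C.erase b).erase c).card *
            (((C.erase b).erase c).card * (C.card - 1)) else 0 := by
    intro a ha b hb c hc
    have h5 : ∀ d ∈ C, (∑ e ∈ C, ∑ f ∈ C,
        if (((a ≠ -b ∧ a ≠ c ∧ b ≠ c) ∧ (b ≠ d ∧ c ≠ d)) ∧ (b ≠ e ∧ c ≠ e)) ∧ a ≠ f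
        then (1:ℕ) else 0)
        = if (a ≠ -b ∧ a ≠ c ∧ b ≠ c) ∧ (b ≠ d ∧ c ≠ d)
            then ((C.erase b).erase c).card * (C.card - 1) else 0 := by
      intro d hd
      rw [Finset.sum_congr rfl (fun e _ => hf _ _ a ha),
        sum_ite_and_left C ((a ≠ -b ∧ a ≠ c ∧ b ≠ c) ∧ (b ≠ d ∧ c ≠ d))
          (fun e => b ≠ e ∧ c ≠ e) (fun _ => C.card - 1),
        sum_ite_const, filter_ne_two]
    rw [Finset.sum_congr rfl h5,
      sum_ite_and_left C (a ≠ -b ∧ a ≠ c ∧ b ≠ c) (fun d => b ≠ d ∧ c ≠ d)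
        (fun _ => ((C.erase b).erase c).card * (C.card - 1)),
      sum_ite_const, filter_ne_two]
  rw [Finset.sum_congr rfl (fun a ha => Finset.sum_congr rfl fun b hb =>
    Finset.sum_congr rfl fun c hc => key a ha b hb c hc)]
  exact common_tail C hsym _ (fun a ha b hb c hc hg => by
    rw [card_erase_two hb hc hg.2]; rfl)



open SignedPaper

def M1 : Fin 6 → Fin 6 → Bool :=
  ![![false,true,true,false,false,true],
    ![true,false,true,true,false,false],
    ![true,true,false,true,true,false],
    ![false,true,true,false,true,false],
    ![false,false,true,true,false,false],
    ![true,false,false,false,false,false]]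

def G1 : SimpleGraph (Fin 6) where
  Adj v w := M1 v w = true
  symm := ⟨fun v w => (by decide : ∀ v w : Fin 6, M1 v w = true → M1 w v = true) v w⟩
  loopless := ⟨fun v => (by decide : ∀ v : Fin 6, ¬ M1 v v = true) v⟩

instance : DecidableRel G1.Adj := fun v w => inferInstanceAs (Decidable (M1 v w = true))

def sg : Sym2 (Fin 6) → ℤ := fun e => if e = s(0, 1) then -1 else 1

def tup (t : ℤ × ℤ × ℤ × ℤ × ℤ × ℤ) : Fin 6 → ℤ :=
  ![t.1, t.2.1, t.2.2.1, t.2.2.2.1, t.2.2.2.2.1, t.2.2.2.2.2]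

lemma tup_inj : Function.Injective tup := by
  rintro ⟨a,b,c,d,e,f⟩ ⟨a',b',c',d',e',f'⟩ h
  have h0 : a = a' := congrFun h 0
  have h1 : b = b' := congrFun h 1
  have h2 : c = c' := congrFun h 2
  have h3 : d = d' := congrFun h 3
  have h4 : e = e' := congrFun h 4
  have h5 : f = f' := congrFun h 5
  simp_all

lemma sg01 : sg s((0 : Fin 6), 1) = -1 := by simp [sg]

lemma pc1 (C : Finset ℤ) :
    properCount G1 sg C = ∑ a ∈ C, ∑ b ∈ C, ∑ c ∈ C, ∑ d ∈ C, ∑ e ∈ C, ∑ f ∈ C,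
      if (((a ≠ -b ∧ a ≠ c ∧ b ≠ c) ∧ (b ≠ d ∧ c ≠ d)) ∧ (c ≠ e ∧ d ≠ e)) ∧ a ≠ f
      then (1:ℕ) else 0 := by
  classical
  have himg : ProperColourings G1 sg C = tup ''
      ((((C ×ˢ (C ×ˢ (C ×ˢ (C ×ˢ (C ×ˢ C))))).filter
        (fun t => (((t.1 ≠ -t.2.1 ∧ t.1 ≠ t.2.2.1 ∧ t.2.1 ≠ t.2.2.1) ∧
          (t.2.1 ≠ t.2.2.2.1 ∧ t.2.2.1 ≠ t.2.2.2.1)) ∧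
          (t.2.2.1 ≠ t.2.2.2.2.1 ∧ t.2.2.2.1 ≠ t.2.2.2.2.1)) ∧
          t.1 ≠ t.2.2.2.2.2)) : Finset (ℤ × ℤ × ℤ × ℤ × ℤ × ℤ)) : Set (ℤ × ℤ × ℤ × ℤ × ℤ × ℤ)) := by
    ext κ
    constructor
    · rintro ⟨hmem, hedge⟩
      refine ⟨(κ 0, κ 1, κ 2, κ 3, κ 4, κ 5), ?_, ?_⟩
      · simp only [Finset.coe_filter, Set.mem_setOf_eq, Finset.mem_product]
        refine ⟨⟨hmem 0, hmem 1, hmem 2, hmem 3, hmem 4, hmem 5⟩, ?_⟩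
        have E01 := hedge 0 1 (by decide)
        have E02 := hedge 0 2 (by decide)
        have E12 := hedge 1 2 (by decide)
        have E13 := hedge 1 3 (by decide)
        have E23 := hedge 2 3 (by decide)
        have E24 := hedge 2 4 (by decide)
        have E34 := hedge 3 4 (by decide)
        have E05 := hedge 0 5 (by decide)
        rw [show sg s((0:Fin 6),1) = -1 by simp only [sg]; rw [if_pos (by decide)]] at E01
        rw [show sg s((0:Fin 6),2) = 1 by simp only [sg]; rw [if_neg (by decide)]] at E02
        rw [show sg s((1:Fin 6),2) = 1 by simp only [sg]; rw [if_neg (by decide)]] at E12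
        rw [show sg s((1:Fin 6),3) = 1 by simp only [sg]; rw [if_neg (by decide)]] at E13
        rw [show sg s((2:Fin 6),3) = 1 by simp only [sg]; rw [if_neg (by decide)]] at E23
        rw [show sg s((2:Fin 6),4) = 1 by simp only [sg]; rw [if_neg (by decide)]] at E24
        rw [show sg s((3:Fin 6),4) = 1 by simp only [sg]; rw [if_neg (by decide)]] at E34
        rw [show sg s((0:Fin 6),5) = 1 by simp only [sg]; rw [if_neg (by decide)]] at E05
        refine ⟨⟨⟨⟨by omega, by omega, by omega⟩, by omega, by omega⟩, by omega, by omega⟩, by omega⟩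
      · funext i
        fin_cases i <;> rfl
    · rintro ⟨⟨a,b,c,d,e,f⟩, hmem, rfl⟩
      simp only [Finset.coe_filter, Set.mem_setOf_eq, Finset.mem_product] at hmem
      obtain ⟨⟨ha, hb, hc, hd, he, hf⟩, ⟨⟨⟨q1, q2, q3⟩, q4, q5⟩, q6, q7⟩, q8⟩ := hmem
      constructor
      · intro v; fin_cases v <;> simpa [tup]
      · intro v w hvw
        fin_cases v
        · fin_cases w
          · exact absurd hvw (by decide)
          · show a ≠ sg s(0, 1) * b
            rw [show sg s((0:Fin 6), (1:Fin 6)) = -1 from by simp only [sg]; rw [if_pos (by decide)]]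
            omega
          · show a ≠ sg s(0, 2) * c
            rw [show sg s((0:Fin 6), (2:Fin 6)) = 1 from by simp only [sg]; rw [if_neg (by decide)]]
            omega
          · exact absurd hvw (by decide)
          · exact absurd hvw (by decide)
          · show a ≠ sg s(0, 5) * f
            rw [show sg s((0:Fin 6), (5:Fin 6)) = 1 from by simp only [sg]; rw [if_neg (by decide)]]
            omega
        · fin_cases w
          · show b ≠ sg s(1, 0) * a
            rw [show sg s((1:Fin 6), (0:Fin 6)) = -1 from by simp only [sg]; rw [if_pos (by decide)]]
            omega
          · exact absurd hvw (by decide)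
          · show b ≠ sg s(1, 2) * c
            rw [show sg s((1:Fin 6), (2:Fin 6)) = 1 from by simp only [sg]; rw [if_neg (by decide)]]
            omega
          · show b ≠ sg s(1, 3) * d
            rw [show sg s((1:Fin 6), (3:Fin 6)) = 1 from by simp only [sg]; rw [if_neg (by decide)]]
            omega
          · exact absurd hvw (by decide)
          · exact absurd hvw (by decide)
        · fin_cases w
          · show c ≠ sg s(2, 0) * a
            rw [show sg s((2:Fin 6), (0:Fin 6)) = 1 from by simp only [sg]; rw [if_neg (by decide)]]
            omega
          · show c ≠ sg s(2, 1) * b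
            rw [show sg s((2:Fin 6), (1:Fin 6)) = 1 from by simp only [sg]; rw [if_neg (by decide)]]
            omega
          · exact absurd hvw (by decide)
          · show c ≠ sg s(2, 3) * d
            rw [show sg s((2:Fin 6), (3:Fin 6)) = 1 from by simp only [sg]; rw [if_neg (by decide)]]
            omega
          · show c ≠ sg s(2, 4) * e
            rw [show sg s((2:Fin 6), (4:Fin 6)) = 1 from by simp only [sg]; rw [if_neg (by decide)]]
            omega
          · exact absurd hvw (by decide)
        · fin_cases w
          · exact absurd hvw (by decide)
          · show d ≠ sg s(3, 1) * b
            rw [show sg s((3:Fin 6), (1:Fin 6)) = 1 from by simp only [sg]; rw [if_neg (by decide)]]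
            omega
          · show d ≠ sg s(3, 2) * c
            rw [show sg s((3:Fin 6), (2:Fin 6)) = 1 from by simp only [sg]; rw [if_neg (by decide)]]
            omega
          · exact absurd hvw (by decide)
          · show d ≠ sg s(3, 4) * e
            rw [show sg s((3:Fin 6), (4:Fin 6)) = 1 from by simp only [sg]; rw [if_neg (by decide)]]
            omega
          · exact absurd hvw (by decide)
        · fin_cases w
          · exact absurd hvw (by decide)
          · exact absurd hvw (by decide)
          · show e ≠ sg s(4, 2) * c
            rw [show sg s((4:Fin 6), (2:Fin 6)) = 1 from by simp only [sg]; rw [if_neg (by decide)]]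
            omega
          · show e ≠ sg s(4, 3) * d
            rw [show sg s((4:Fin 6), (3:Fin 6)) = 1 from by simp only [sg]; rw [if_neg (by decide)]]
            omega
          · exact absurd hvw (by decide)
          · exact absurd hvw (by decide)
        · fin_cases w
          · show f ≠ sg s(5, 0) * a
            rw [show sg s((5:Fin 6), (0:Fin 6)) = 1 from by simp only [sg]; rw [if_neg (by decide)]]
            omega
          · exact absurd hvw (by decide)
          · exact absurd hvw (by decide)
          · exact absurd hvw (by decide)
          · exact absurd hvw (by decide)
          · exact absurd hvw (by decide)
  rw [properCount, himg, Set.ncard_image_of_injective _ tup_inj, Set.ncard_coe_finset,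
    Finset.card_filter]
  simp only [Finset.sum_product]

def M2 : Fin 6 → Fin 6 → Bool :=
  ![![false,true,true,false,false,true],
    ![true,false,true,true,true,false],
    ![true,true,false,true,true,false],
    ![false,true,true,false,false,false],
    ![false,true,true,false,false,false],
    ![true,false,false,false,false,false]]

def G2 : SimpleGraph (Fin 6) where
  Adj v w := M2 v w = true
  symm := ⟨fun v w => (by decide : ∀ v w : Fin 6, M2 v w = true → M2 w v = true) v w⟩
  loopless := ⟨fun v => (by decide : ∀ v : Fin 6, ¬ M2 v v = true) v⟩

instance : DecidableRel G2.Adj := fun v w => inferInstanceAs (Decidable (M2 v w = true))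

lemma pc2 (C : Finset ℤ) :
    properCount G2 sg C = ∑ a ∈ C, ∑ b ∈ C, ∑ c ∈ C, ∑ d ∈ C, ∑ e ∈ C, ∑ f ∈ C,
      if (((a ≠ -b ∧ a ≠ c ∧ b ≠ c) ∧ (b ≠ d ∧ c ≠ d)) ∧ (b ≠ e ∧ c ≠ e)) ∧ a ≠ f
      then (1:ℕ) else 0 := by
  classical
  have himg : ProperColourings G2 sg C = tup ''
      ((((C ×ˢ (C ×ˢ (C ×ˢ (C ×ˢ (C ×ˢ C))))).filter
        (fun t => (((t.1 ≠ -t.2.1 ∧ t.1 ≠ t.2.2.1 ∧ t.2.1 ≠ t.2.2.1) ∧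
          (t.2.1 ≠ t.2.2.2.1 ∧ t.2.2.1 ≠ t.2.2.2.1)) ∧
          (t.2.1 ≠ t.2.2.2.2.1 ∧ t.2.2.1 ≠ t.2.2.2.2.1)) ∧
          t.1 ≠ t.2.2.2.2.2)) : Finset (ℤ × ℤ × ℤ × ℤ × ℤ × ℤ)) : Set (ℤ × ℤ × ℤ × ℤ × ℤ × ℤ)) := by
    ext κ
    constructor
    · rintro ⟨hmem, hedge⟩
      refine ⟨(κ 0, κ 1, κ 2, κ 3, κ 4, κ 5), ?_, ?_⟩
      · simp only [Finset.coe_filter, Set.mem_setOf_eq, Finset.mem_product]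
        refine ⟨⟨hmem 0, hmem 1, hmem 2, hmem 3, hmem 4, hmem 5⟩, ?_⟩
        have E01 := hedge 0 1 (by decide)
        have E02 := hedge 0 2 (by decide)
        have E12 := hedge 1 2 (by decide)
        have E13 := hedge 1 3 (by decide)
        have E23 := hedge 2 3 (by decide)
        have E14 := hedge 1 4 (by decide)
        have E24 := hedge 2 4 (by decide)
        have E05 := hedge 0 5 (by decide)
        rw [show sg s((0:Fin 6),1) = -1 by simp only [sg]; rw [if_pos (by decide)]] at E01
        rw [show sg s((0:Fin 6),2) = 1 by simp only [sg]; rw [if_neg (by decide)]] at E02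
        rw [show sg s((1:Fin 6),2) = 1 by simp only [sg]; rw [if_neg (by decide)]] at E12
        rw [show sg s((1:Fin 6),3) = 1 by simp only [sg]; rw [if_neg (by decide)]] at E13
        rw [show sg s((2:Fin 6),3) = 1 by simp only [sg]; rw [if_neg (by decide)]] at E23
        rw [show sg s((1:Fin 6),4) = 1 by simp only [sg]; rw [if_neg (by decide)]] at E14
        rw [show sg s((2:Fin 6),4) = 1 by simp only [sg]; rw [if_neg (by decide)]] at E24
        rw [show sg s((0:Fin 6),5) = 1 by simp only [sg]; rw [if_neg (by decide)]] at E05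
        refine ⟨⟨⟨⟨by omega, by omega, by omega⟩, by omega, by omega⟩, by omega, by omega⟩, by omega⟩
      · funext i
        fin_cases i <;> rfl
    · rintro ⟨⟨a,b,c,d,e,f⟩, hmem, rfl⟩
      simp only [Finset.coe_filter, Set.mem_setOf_eq, Finset.mem_product] at hmem
      obtain ⟨⟨ha, hb, hc, hd, he, hf⟩, ⟨⟨⟨q1, q2, q3⟩, q4, q5⟩, q6, q7⟩, q8⟩ := hmem
      constructor
      · intro v; fin_cases v <;> simpa [tup]
      · intro v w hvw
        fin_cases v
        · fin_cases w
          · exact absurd hvw (by decide)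
          · show a ≠ sg s(0, 1) * b
            rw [show sg s((0:Fin 6), (1:Fin 6)) = -1 from by simp only [sg]; rw [if_pos (by decide)]]
            omega
          · show a ≠ sg s(0, 2) * c
            rw [show sg s((0:Fin 6), (2:Fin 6)) = 1 from by simp only [sg]; rw [if_neg (by decide)]]
            omega
          · exact absurd hvw (by decide)
          · exact absurd hvw (by decide)
          · show a ≠ sg s(0, 5) * f
            rw [show sg s((0:Fin 6), (5:Fin 6)) = 1 from by simp only [sg]; rw [if_neg (by decide)]]
            omega
        · fin_cases w
          · show b ≠ sg s(1, 0) * a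
            rw [show sg s((1:Fin 6), (0:Fin 6)) = -1 from by simp only [sg]; rw [if_pos (by decide)]]
            omega
          · exact absurd hvw (by decide)
          · show b ≠ sg s(1, 2) * c
            rw [show sg s((1:Fin 6), (2:Fin 6)) = 1 from by simp only [sg]; rw [if_neg (by decide)]]
            omega
          · show b ≠ sg s(1, 3) * d
            rw [show sg s((1:Fin 6), (3:Fin 6)) = 1 from by simp only [sg]; rw [if_neg (by decide)]]
            omega
          · show b ≠ sg s(1, 4) * e
            rw [show sg s((1:Fin 6), (4:Fin 6)) = 1 from by simp only [sg]; rw [if_neg (by decide)]]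
            omega
          · exact absurd hvw (by decide)
        · fin_cases w
          · show c ≠ sg s(2, 0) * a
            rw [show sg s((2:Fin 6), (0:Fin 6)) = 1 from by simp only [sg]; rw [if_neg (by decide)]]
            omega
          · show c ≠ sg s(2, 1) * b
            rw [show sg s((2:Fin 6), (1:Fin 6)) = 1 from by simp only [sg]; rw [if_neg (by decide)]]
            omega
          · exact absurd hvw (by decide)
          · show c ≠ sg s(2, 3) * d
            rw [show sg s((2:Fin 6), (3:Fin 6)) = 1 from by simp only [sg]; rw [if_neg (by decide)]]
            omega
          · show c ≠ sg s(2, 4) * e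
            rw [show sg s((2:Fin 6), (4:Fin 6)) = 1 from by simp only [sg]; rw [if_neg (by decide)]]
            omega
          · exact absurd hvw (by decide)
        · fin_cases w
          · exact absurd hvw (by decide)
          · show d ≠ sg s(3, 1) * b
            rw [show sg s((3:Fin 6), (1:Fin 6)) = 1 from by simp only [sg]; rw [if_neg (by decide)]]
            omega
          · show d ≠ sg s(3, 2) * c
            rw [show sg s((3:Fin 6), (2:Fin 6)) = 1 from by simp only [sg]; rw [if_neg (by decide)]]
            omega
          · exact absurd hvw (by decide)
          · exact absurd hvw (by decide)
          · exact absurd hvw (by decide)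
        · fin_cases w
          · exact absurd hvw (by decide)
          · show e ≠ sg s(4, 1) * b
            rw [show sg s((4:Fin 6), (1:Fin 6)) = 1 from by simp only [sg]; rw [if_neg (by decide)]]
            omega
          · show e ≠ sg s(4, 2) * c
            rw [show sg s((4:Fin 6), (2:Fin 6)) = 1 from by simp only [sg]; rw [if_neg (by decide)]]
            omega
          · exact absurd hvw (by decide)
          · exact absurd hvw (by decide)
          · exact absurd hvw (by decide)
        · fin_cases w
          · show f ≠ sg s(5, 0) * a
            rw [show sg s((5:Fin 6), (0:Fin 6)) = 1 from by simp only [sg]; rw [if_neg (by decide)]]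
            omega
          · exact absurd hvw (by decide)
          · exact absurd hvw (by decide)
          · exact absurd hvw (by decide)
          · exact absurd hvw (by decide)
          · exact absurd hvw (by decide)
  rw [properCount, himg, Set.ncard_image_of_injective _ tup_inj, Set.ncard_coe_finset,
    Finset.card_filter]
  simp only [Finset.sum_product]


lemma colour_card (lam : ℕ) : (colourSet lam).card = lam := by
  unfold colourSet
  rcases Nat.even_or_odd lam with h | h
  · have h2 : lam % 2 = 0 := Nat.even_iff.mp h
    rw [if_pos h, Finset.card_erase_of_mem (by simp only [Finset.mem_Icc]; omega), Int.card_Icc]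
    omega
  · have h2 : lam % 2 = 1 := Nat.odd_iff.mp h
    rw [if_neg (by simpa using Nat.not_even_iff_odd.mpr h), Int.card_Icc]
    omega

lemma colour_symm (lam : ℕ) : ∀ a ∈ colourSet lam, -a ∈ colourSet lam := by
  intro a ha
  unfold colourSet at *
  split_ifs at * with h <;>
    simp only [Finset.mem_erase, Finset.mem_Icc] at * <;> omega

lemma zero_not_mem_even (lam : ℕ) (h : Even lam) : (0:ℤ) ∉ colourSet lam := by
  unfold colourSet
  rw [if_pos h]
  simp

lemma zero_mem_odd (lam : ℕ) (h : Odd lam) : (0:ℤ) ∈ colourSet lam := by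
  unfold colourSet
  rw [if_neg (by simpa using Nat.not_even_iff_odd.mpr h)]
  simp only [Finset.mem_Icc]
  omega

lemma count1_closed (lam : ℕ) : signedCount G1 sg lam = closedF (colourSet lam) := by
  rw [signedCount, pc1, hexa1 _ (colour_symm lam)]

lemma count2_closed (lam : ℕ) : signedCount G2 sg lam = closedF (colourSet lam) := by
  rw [signedCount, pc2, hexa2 _ (colour_symm lam)]

lemma closed_even (lam : ℕ) (h : Even lam) :
    (closedF (colourSet lam) : ℤ) =
      (lam : ℤ) * ((lam : ℤ) - 1) * ((lam : ℤ) - 2) ^ 2 * ((lam : ℤ) ^ 2 - 3 * lam + 3) := by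
  rw [closedF, if_neg (zero_not_mem_even lam h), colour_card]
  rcases Nat.eq_zero_or_pos lam with h0 | h0
  · subst h0; simp [X0, W]
  · have h2 : 2 ≤ lam := by
      rcases h with ⟨k, rfl⟩; omega
    have e1 : ((lam - 1 : ℕ) : ℤ) = (lam : ℤ) - 1 := by omega
    have e2 : ((lam - 2 : ℕ) : ℤ) = (lam : ℤ) - 2 := by omega
    simp only [X0, W]
    push_cast [e1, e2]
    ring

lemma closed_odd (lam : ℕ) (h : Odd lam) :
    (closedF (colourSet lam) : ℤ) = ((lam : ℤ) - 1) ^ 4 * ((lam : ℤ) - 2) ^ 2 := by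
  rw [closedF, if_pos (zero_mem_odd lam h), colour_card]
  rcases Nat.lt_or_ge lam 2 with h0 | h0
  · interval_cases lam
    · simp at h
    · simp [X0, Y0, W]
  · have e1 : ((lam - 1 : ℕ) : ℤ) = (lam : ℤ) - 1 := by omega
    have e2 : ((lam - 2 : ℕ) : ℤ) = (lam : ℤ) - 2 := by omega
    simp only [X0, Y0, W]
    push_cast [e1, e2]
    ring

def w1 : G1.Walk 0 0 :=
  .cons (by decide) (.cons (by decide : G1.Adj 1 2) (.cons (by decide : G1.Adj 2 0) .nil))

def w2 : G2.Walk 0 0 :=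
  .cons (by decide) (.cons (by decide : G2.Adj 1 2) (.cons (by decide : G2.Adj 2 0) .nil))

lemma w1_cycle : w1.IsCycle := by
  rw [SimpleGraph.Walk.isCycle_def]
  refine ⟨⟨?_⟩, ?_, ?_⟩
  · decide
  · simp [w1]
  · decide

lemma w2_cycle : w2.IsCycle := by
  rw [SimpleGraph.Walk.isCycle_def]
  refine ⟨⟨?_⟩, ?_, ?_⟩
  · decide
  · simp [w2]
  · decide

lemma w1_prod : (w1.edges.map sg).prod = -1 := by simp [w1, sg]

lemma w2_prod : (w2.edges.map sg).prod = -1 := by simp [w2, sg]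

lemma not_iso : IsEmpty (G1 ≃g G2) := by
  constructor
  intro e
  have hdeg : ∀ v, G1.degree v = G2.degree (e v) := by
    intro v
    rw [← SimpleGraph.card_neighborSet_eq_degree, ← SimpleGraph.card_neighborSet_eq_degree]
    exact Fintype.card_congr (e.mapNeighborSet v)
  have h1 : ∀ v : Fin 6, G1.degree v = 4 → v = 2 := by decide
  have h2a : G2.degree 1 = 4 := by decide
  have h2b : G2.degree 2 = 4 := by decide
  have hha : e.symm 1 = 2 := h1 _ (by rw [hdeg, e.apply_symm_apply, h2a])
  have hhb : e.symm 2 = 2 := h1 _ (by rw [hdeg, e.apply_symm_apply, h2b])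
  have : (1 : Fin 6) = 2 := e.symm.injective (hha.trans hhb.symm)
  exact absurd this (by decide)

lemma sg_pm : ∀ e : Sym2 (Fin 6), sg e = 1 ∨ sg e = -1 := by
  intro e
  rw [sg]
  split_ifs <;> simp


end SignedAux

open SignedPaper in
/-- there exist unbalanced signed graphs on 6 vertices with
non-isomorphic underlying graphs and the same counting function, given by
`x(x-1)(x-2)²(x²-3x+3)` at even `λ` and `(x-1)⁴(x-2)²` at odd `λ`. -/
theorem stmt_4 :
    ∃ (G₁ G₂ : SimpleGraph (Fin 6)) (σ₁ σ₂ : Sym2 (Fin 6) → ℤ),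
      (∀ e ∈ G₁.edgeSet, σ₁ e = 1 ∨ σ₁ e = -1) ∧
      (∀ e ∈ G₂.edgeSet, σ₂ e = 1 ∨ σ₂ e = -1) ∧
      ¬ IsBalanced G₁ σ₁ ∧ ¬ IsBalanced G₂ σ₂ ∧
      IsEmpty (G₁ ≃g G₂) ∧
      (∀ lam : ℕ, signedCount G₁ σ₁ lam = signedCount G₂ σ₂ lam) ∧
      (∀ lam : ℕ, Even lam → (signedCount G₁ σ₁ lam : ℤ) =
        (lam : ℤ) * ((lam : ℤ) - 1) * ((lam : ℤ) - 2) ^ 2 *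
          ((lam : ℤ) ^ 2 - 3 * lam + 3)) ∧
      (∀ lam : ℕ, Odd lam → (signedCount G₁ σ₁ lam : ℤ) =
        ((lam : ℤ) - 1) ^ 4 * ((lam : ℤ) - 2) ^ 2) := by
  refine ⟨SignedAux.G1, SignedAux.G2, SignedAux.sg, SignedAux.sg, ?_, ?_, ?_, ?_, ?_, ?_, ?_, ?_⟩
  · exact fun e _ => SignedAux.sg_pm e
  · exact fun e _ => SignedAux.sg_pm e
  · intro h
    have := h 0 SignedAux.w1 SignedAux.w1_cycle
    rw [SignedAux.w1_prod] at this
    exact absurd this (by decide)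
  · intro h
    have := h 0 SignedAux.w2 SignedAux.w2_cycle
    rw [SignedAux.w2_prod] at this
    exact absurd this (by decide)
  · exact SignedAux.not_iso
  · intro lam
    rw [SignedAux.count1_closed, SignedAux.count2_closed]
  · intro lam h
    rw [SignedAux.count1_closed, SignedAux.closed_even lam h]
  · intro lam h
    rw [SignedAux.count1_closed, SignedAux.closed_odd lam h]
end

section
/- Let n ≥ 0 be an integer and let −K_n be the all-negative signed complete graph on n vertices (so a proper C-colouring of −K_n is a function κ on the n vertices with κ(u) ≠ −κ(v) for all distinct vertices u, v). Then for every even integer λ ≥ 0, f(−K_n, λ) = H(n, λ), and for every odd integer λ ≥ 1, f(−K_n, λ) = H(n, λ−1) + n·H(n−1, λ−1), where H(n, x) = Σ_{i=0}^{n} S(n,i)·₂(x)_i for n ≥ 0 and H(n, x) = 0 for n < 0. -/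
open Finset

namespace SignedPaper

/-- Falling factorial `(x)_n = x(x-1)⋯(x-n+1)`. -/
def fallFac (x : ℤ) (n : ℕ) : ℤ := ∏ j ∈ Finset.range n, (x - j)

/-- `₂(x)_n = x(x-2)(x-4)⋯(x-2(n-1))`. -/
def fallFac2 (x : ℤ) (n : ℕ) : ℤ := ∏ j ∈ Finset.range n, (x - 2 * j)

/-- Stirling number of the second kind `S(n,k)`: the number of partitions of an
`n`-element set into `k` nonempty blocks. -/
noncomputable def stirling2 (n k : ℕ) : ℕ :=
  Nat.card {p : Finpartition (Finset.univ : Finset (Fin n)) // p.parts.card = k}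

/-- `T(n,k) = (n)_{2k} / (2^k k!)`, the number of matchings of size `k` in `K_n`. -/
def matchNum (n k : ℕ) : ℕ := n.descFactorial (2 * k) / (2 ^ k * k.factorial)

/-- `H(n, x)`. -/
noncomputable def H (n : ℤ) (x : ℤ) : ℤ :=
  if n < 0 then 0
  else ∑ i ∈ Finset.range (n.toNat + 1), (stirling2 n.toNat i : ℤ) * fallFac2 x i

/-- `H₁(l, m, n, x)`. -/
noncomputable def H1 (l m n : ℤ) (x : ℤ) : ℤ :=
  if l < 0 ∨ m < 0 ∨ n < 0 then 0
  else ∑ i ∈ Finset.range (l.toNat + 1), ∑ j ∈ Finset.range (n.toNat + 1),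
    ∑ k ∈ Finset.range (min i j + 1),
      (k.factorial : ℤ) * (i.choose k : ℤ) * (j.choose k : ℤ) *
        (stirling2 l.toNat i : ℤ) * (stirling2 n.toNat j : ℤ) *
        fallFac2 x (i + j - k) * fallFac (x - i - j) m.toNat

/-- `H₂(l, m, n, x)`. -/
noncomputable def H2 (l m n : ℤ) (x : ℤ) : ℤ :=
  if l < 0 ∨ m < 0 ∨ n < 0 then 0
  else ∑ i ∈ Finset.range (l.toNat + 1), ∑ j ∈ Finset.range (m.toNat + 1),
    ∑ k ∈ Finset.range (n.toNat + 1), ∑ s ∈ Finset.range (min i j + 1),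
      ∑ t ∈ Finset.range (k + 1),
        (s.factorial : ℤ) * (i.choose s : ℤ) * (j.choose s : ℤ) * (k.choose t : ℤ) *
          (stirling2 l.toNat i : ℤ) * (stirling2 m.toNat j : ℤ) * (stirling2 n.toNat k : ℤ) *
          fallFac2 x (i + j + k - t - s) * fallFac ((i : ℤ) + j - 2 * s) t

/-- `H₃(l, m, n, x)`. -/
noncomputable def H3 (l m n : ℤ) (x : ℤ) : ℤ :=
  if l < 0 ∨ m < 0 ∨ n < 0 then 0
  else ∑ i ∈ Finset.range (min l.toNat m.toNat + 1),
    ∑ j ∈ Finset.range ((l.toNat - i) / 2 + 1), ∑ k ∈ Finset.range ((m.toNat - i) / 2 + 1),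
      (i.factorial : ℤ) * (l.toNat.choose i : ℤ) * (m.toNat.choose i : ℤ) *
        (matchNum (l.toNat - i) j : ℤ) * (matchNum (m.toNat - i) k : ℤ) *
        fallFac2 x (l.toNat + m.toNat - i - j - k) * fallFac (x - l - m + i) n.toNat

/-- `H₄(l, m, n, x)`. -/
noncomputable def H4 (l m n : ℤ) (x : ℤ) : ℤ :=
  if l < 0 ∨ m < 0 ∨ n < 0 then 0
  else ∑ i ∈ Finset.range (min l.toNat m.toNat + 1),
    ∑ j ∈ Finset.range ((l.toNat - i) / 2 + 1), ∑ k ∈ Finset.range ((m.toNat - i) / 2 + 1),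
      ∑ s ∈ Finset.range (n.toNat + 1), ∑ t ∈ Finset.range (s + 1),
        (i.factorial : ℤ) * (l.toNat.choose i : ℤ) * (m.toNat.choose i : ℤ) *
          (s.choose t : ℤ) * (stirling2 n.toNat s : ℤ) *
          (matchNum (l.toNat - i) j : ℤ) * (matchNum (m.toNat - i) k : ℤ) *
          fallFac2 x (l.toNat + m.toNat + s - i - j - k - t) *
          fallFac ((l : ℤ) + m - i - 2 * j - 2 * k) t

/-- A `(λ, μ)`-colour set with paired part `P` and unpaired part `U`. -/
def IsColourSet (lam mu : ℕ) (C : Finset ℤ) : Prop :=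
  ∃ P U : Finset ℤ,
    (0 : ℤ) ∉ P ∧ (0 : ℤ) ∉ U ∧ Disjoint P U ∧
    (∀ x ∈ P, -x ∈ P) ∧ U.card = mu ∧ (∀ x ∈ U, -x ∉ U) ∧
    ((Even (lam - mu) ∧ P.card = lam - mu ∧ C = P ∪ U) ∨
     (¬ Even (lam - mu) ∧ P.card = lam - mu - 1 ∧ C = P ∪ U ∪ {0}))


end SignedPaper


namespace Aux
open SignedPaper
open Finpartition


/-- number of "good" functions: values in C, pairwise non-negating. -/
def goodCount (β : Type) [Fintype β] [DecidableEq β] (C : Finset ℤ) : ℕ :=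
  ((Fintype.piFinset fun _ : β => C).filter fun κ => ∀ u v : β, u ≠ v → κ u ≠ -κ v).card

/-- number of good injective labelings -/
def labelCount (β : Type) [Fintype β] [DecidableEq β] (C : Finset ℤ) : ℕ :=
  ((Fintype.piFinset fun _ : β => C).filter
    fun g => ∀ P Q : β, P ≠ Q → g P ≠ g Q ∧ g P ≠ -g Q).card


lemma labelCount_eq (C : Finset ℤ) (h0 : (0:ℤ) ∉ C) (hsym : ∀ x ∈ C, -x ∈ C) :
    ∀ (n : ℕ) (β : Type) [Fintype β] [DecidableEq β], Fintype.card β = n →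
      (labelCount β C : ℤ) = fallFac2 (C.card) n := by
  intro n
  induction n with
  | zero =>
    intro β _ _ hcard
    have : IsEmpty β := Fintype.card_eq_zero_iff.mp hcard
    have : ∀ g ∈ (Fintype.piFinset fun _ : β => C),
        (∀ P Q : β, P ≠ Q → g P ≠ g Q ∧ g P ≠ -g Q) := fun g _ P Q h => (this.false P).elim
    rw [labelCount, Finset.filter_true_of_mem this]
    simp [fallFac2]
  | succ n ih =>
    intro β _ _ hcard
    obtain ⟨b⟩ : Nonempty β := Fintype.card_pos_iff.mp (by omega)
    set β' := {x : β // x ≠ b} with hβ'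
    have hcard' : Fintype.card β' = n := by
      have h1 : Fintype.card {x : β // x = b} = 1 := Fintype.card_subtype_eq b
      have h2 := Fintype.card_subtype_compl (fun x : β => x = b)
      rw [h1, hcard] at h2
      have h3 : Fintype.card β' = Fintype.card {x : β // ¬ x = b} :=
        Fintype.card_congr (Equiv.subtypeEquivRight (by simp))
      omega
    set A := ((Fintype.piFinset fun _ : β => C).filter
      fun g => ∀ P Q : β, P ≠ Q → g P ≠ g Q ∧ g P ≠ -g Q) with hA
    set A' := ((Fintype.piFinset fun _ : β' => C).filter
      fun g => ∀ P Q : β', P ≠ Q → g P ≠ g Q ∧ g P ≠ -g Q) with hA'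
    have hres : ∀ g ∈ A, (fun x : β' => g x.1) ∈ A' := by
      intro g hg
      rw [hA, mem_filter, Fintype.mem_piFinset] at hg
      rw [hA', mem_filter, Fintype.mem_piFinset]
      exact ⟨fun x => hg.1 x.1, fun P Q hPQ => hg.2 P.1 Q.1 (fun h => hPQ (Subtype.ext h))⟩
    have key : A.card = ∑ g' ∈ A', (A.filter (fun g => (fun x : β' => g x.1) = g')).card :=
      Finset.card_eq_sum_card_fiberwise hres
    -- each fiber has card C.card - 2*n  (as a finset count)
    have fiber : ∀ g' ∈ A', (A.filter (fun g => (fun x : β' => g x.1) = g')).card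
        = (C \ ((univ : Finset β').image g' ∪ (univ : Finset β').image (fun x => -g' x))).card := by
      intro g' hg'
      rw [hA', mem_filter, Fintype.mem_piFinset] at hg'
      set D := ((univ : Finset β').image g' ∪ (univ : Finset β').image (fun x => -g' x)) with hD
      refine Finset.card_nbij' (fun g => g b) (fun c => fun x => if h : x = b then c else g' ⟨x, h⟩)
        ?_ ?_ ?_ ?_
      · intro g hg
        rw [Finset.mem_coe, mem_filter] at hg
        obtain ⟨hgA, hgres⟩ := hg
        rw [hA, mem_filter, Fintype.mem_piFinset] at hgA
        rw [Finset.mem_coe, mem_sdiff]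
        refine ⟨hgA.1 b, ?_⟩
        rw [hD, mem_union, mem_image, mem_image]
        push_neg
        constructor
        · intro x _ hx
          have hx' : g x.1 = g b := by rw [← hgres] at hx; exact hx
          exact (hgA.2 x.1 b x.2).1 hx'
        · intro x _ hx
          rw [← hgres] at hx
          exact (hgA.2 x.1 b x.2).2 (by rw [← hx]; ring)
      · intro c hc
        rw [Finset.mem_coe, mem_sdiff, hD, mem_union, mem_image, mem_image] at hc
        push_neg at hc
        obtain ⟨hcC, hc1, hc2⟩ := hc
        rw [Finset.mem_coe, mem_filter]
        constructor
        · rw [hA, mem_filter, Fintype.mem_piFinset]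
          constructor
          · intro x
            by_cases h : x = b
            · simp [h, hcC]
            · simp [h]; exact hg'.1 ⟨x, h⟩
          · intro P Q hPQ
            by_cases hP : P = b <;> by_cases hQ : Q = b
            · exact absurd (hP.trans hQ.symm) hPQ
            · subst hP
              simp only [dif_pos, dif_neg hQ]
              refine ⟨fun h => hc1 ⟨Q, hQ⟩ (mem_univ _) h.symm, fun h => ?_⟩
              exact hc2 ⟨Q, hQ⟩ (mem_univ _) (by rw [h])
            · subst hQ
              simp only [dif_pos, dif_neg hP]
              refine ⟨fun h => hc1 ⟨P, hP⟩ (mem_univ _) h, fun h => ?_⟩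
              exact hc2 ⟨P, hP⟩ (mem_univ _) (by rw [h]; ring)
            · simp only [dif_neg hP, dif_neg hQ]
              exact hg'.2 ⟨P, hP⟩ ⟨Q, hQ⟩ (fun h => hPQ (congrArg Subtype.val h))
        · funext x
          simp [x.2]
      · intro g hg
        rw [Finset.mem_coe, mem_filter] at hg
        funext x
        by_cases h : x = b
        · simp [h]
        · simp only [dif_neg h]
          rw [← hg.2]
      · intro c hc
        simp
    have hLA : labelCount β C = A.card := rfl
    have hDprop : ∀ g' ∈ A',
        ((univ : Finset β').image g' ∪ (univ : Finset β').image (fun x => -g' x)) ⊆ C ∧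
        ((univ : Finset β').image g' ∪ (univ : Finset β').image (fun x => -g' x)).card = 2 * n := by
      intro g' hg'
      rw [hA', mem_filter, Fintype.mem_piFinset] at hg'
      have hinj : Function.Injective g' := by
        intro x y hxy
        by_contra h
        exact (hg'.2 x y h).1 hxy
      have hinj2 : Function.Injective (fun x : β' => -g' x) := by
        intro x y hxy
        exact hinj (by simpa using hxy)
      have hdisj : Disjoint ((univ : Finset β').image g')
          ((univ : Finset β').image (fun x => -g' x)) := by
        rw [Finset.disjoint_left]
        intro a ha hb
        rw [mem_image] at ha hb
        obtain ⟨x, _, hx⟩ := ha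
        obtain ⟨y, _, hy⟩ := hb
        by_cases hxy : x = y
        · subst hxy
          rw [← hx] at hy
          have : g' x = 0 := by linarith
          exact h0 (this ▸ hg'.1 x)
        · exact (hg'.2 x y hxy).2 (by rw [hx, ← hy])
      constructor
      · intro a ha
        rw [mem_union, mem_image, mem_image] at ha
        rcases ha with ⟨x, _, hx⟩ | ⟨x, _, hx⟩
        · exact hx ▸ hg'.1 x
        · exact hx ▸ hsym _ (hg'.1 x)
      · rw [Finset.card_union_of_disjoint hdisj,
          Finset.card_image_of_injective _ hinj, Finset.card_image_of_injective _ hinj2,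
          Finset.card_univ, hcard']
        ring
    rcases A'.eq_empty_or_nonempty with hE | ⟨g₀, hg₀⟩
    · have hz : A.card = 0 := by rw [key, hE, Finset.sum_empty]
      have hz' : (labelCount β' C : ℤ) = 0 := by
        have : labelCount β' C = A'.card := rfl
        rw [this, hE]; simp
      have := ih β' hcard'
      rw [hz'] at this
      rw [hLA, hz, fallFac2, Finset.prod_range_succ, ← fallFac2, ← this]
      simp
    · have hle : 2 * n ≤ C.card := by
        have := hDprop g₀ hg₀
        calc 2 * n = _ := (this.2).symm
        _ ≤ C.card := Finset.card_le_card this.1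
      have hfib : ∀ g' ∈ A', (A.filter (fun g => (fun x : β' => g x.1) = g')).card
          = C.card - 2 * n := by
        intro g' hg'
        rw [fiber g' hg', Finset.card_sdiff_of_subset (hDprop g' hg').1, (hDprop g' hg').2]
      have : A.card = A'.card * (C.card - 2 * n) := by
        rw [key, Finset.sum_congr rfl hfib, Finset.sum_const, smul_eq_mul]
      rw [hLA, this, fallFac2, Finset.prod_range_succ, ← fallFac2]
      have ihb := ih β' hcard'
      have : (labelCount β' C : ℤ) = (A'.card : ℤ) := rfl
      rw [this] at ihb
      push_cast [Nat.cast_sub hle]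
      rw [← ihb]




open Finpartition

lemma finpartition_ext {α : Type} [DecidableEq α] [Fintype α]
    (P Q : Finpartition (univ : Finset α)) (h : ∀ a, P.part a = Q.part a) : P = Q := by
  ext t
  constructor
  · intro ht
    obtain ⟨a, ha⟩ := P.nonempty_of_mem_parts ht
    have := P.part_eq_of_mem ht ha
    rw [h a] at this
    exact this ▸ Q.part_mem.2 (mem_univ a)
  · intro ht
    obtain ⟨a, ha⟩ := Q.nonempty_of_mem_parts ht
    have := Q.part_eq_of_mem ht ha
    rw [← h a] at this
    exact this ▸ P.part_mem.2 (mem_univ a)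

def kerSetoid {α : Type} (κ : α → ℤ) : Setoid α :=
  ⟨fun a b => κ a = κ b, ⟨fun _ => rfl, Eq.symm, Eq.trans⟩⟩

instance {α : Type} (κ : α → ℤ) : DecidableRel (kerSetoid κ).r :=
  fun a b => inferInstanceAs (Decidable (κ a = κ b))

/-- the kernel finpartition of a function -/
def ker {α : Type} [DecidableEq α] [Fintype α] (κ : α → ℤ) :
    Finpartition (univ : Finset α) :=
  Finpartition.ofSetoid (kerSetoid κ)

lemma mem_ker_part {α : Type} [DecidableEq α] [Fintype α] (κ : α → ℤ) (a b : α) :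
    b ∈ (ker κ).part a ↔ κ a = κ b :=
  Finpartition.mem_part_ofSetoid_iff_rel

lemma goodCount_fin (n : ℕ) (C : Finset ℤ) (h0 : (0:ℤ) ∉ C) (hsym : ∀ x ∈ C, -x ∈ C) :
    (goodCount (Fin n) C : ℤ)
      = ∑ i ∈ Finset.range (n+1),
          (((univ : Finset (Finpartition (univ : Finset (Fin n)))).filter
              fun p => p.parts.card = i).card : ℤ) * fallFac2 C.card i := by
  set A := ((Fintype.piFinset fun _ : Fin n => C).filter
    fun κ => ∀ u v : Fin n, u ≠ v → κ u ≠ -κ v) with hA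
  have key : A.card = ∑ p ∈ (univ : Finset (Finpartition (univ : Finset (Fin n)))),
      (A.filter (fun κ => ker κ = p)).card :=
    Finset.card_eq_sum_card_fiberwise (fun κ _ => mem_univ _)
  have fiber : ∀ p : Finpartition (univ : Finset (Fin n)),
      (A.filter (fun κ => ker κ = p)).card = labelCount {t // t ∈ p.parts} C := by
    intro p
    symm
    refine Finset.card_bij (fun g _ => fun a => g ⟨p.part a, p.part_mem.2 (mem_univ a)⟩) ?_ ?_ ?_
    · intro g hg
      rw [mem_filter, Fintype.mem_piFinset] at hg
      rw [mem_filter]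
      have good : ∀ u v : Fin n, u ≠ v →
          g ⟨p.part u, p.part_mem.2 (mem_univ u)⟩ ≠ -g ⟨p.part v, p.part_mem.2 (mem_univ v)⟩ := by
        intro u v huv
        by_cases hpp : p.part u = p.part v
        · have : (⟨p.part u, p.part_mem.2 (mem_univ u)⟩ : {t // t ∈ p.parts})
              = ⟨p.part v, p.part_mem.2 (mem_univ v)⟩ := Subtype.ext hpp
          rw [this]
          intro hcon
          have hz : g ⟨p.part v, p.part_mem.2 (mem_univ v)⟩ = 0 := by linarith
          exact h0 (hz ▸ hg.1 _)
        · exact (hg.2 _ _ (fun h => hpp (congrArg Subtype.val h))).2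
      constructor
      · rw [hA, mem_filter, Fintype.mem_piFinset]
        exact ⟨fun a => hg.1 _, good⟩
      · refine finpartition_ext _ _ (fun a => ?_)
        ext b
        rw [mem_ker_part]
        rw [p.mem_part_iff_part_eq_part (mem_univ b) (mem_univ a)]
        constructor
        · intro hgab
          by_contra hne
          exact (hg.2 ⟨p.part a, p.part_mem.2 (mem_univ a)⟩ ⟨p.part b, p.part_mem.2 (mem_univ b)⟩
            (fun h => hne ((congrArg Subtype.val h).symm))).1 hgab
        · intro hba
          exact congrArg g (Subtype.ext hba.symm)
    · intro g hg g' hg' heq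
      funext t
      obtain ⟨a, ha⟩ := p.nonempty_of_mem_parts t.2
      have hpa : (⟨p.part a, p.part_mem.2 (mem_univ a)⟩ : {t // t ∈ p.parts}) = t :=
        Subtype.ext (p.part_eq_of_mem t.2 ha)
      calc g t = g ⟨p.part a, p.part_mem.2 (mem_univ a)⟩ := by rw [hpa]
        _ = g' ⟨p.part a, p.part_mem.2 (mem_univ a)⟩ := congrFun heq a
        _ = g' t := by rw [hpa]
    · intro κ hκ
      rw [mem_filter] at hκ
      obtain ⟨hκA, hκp⟩ := hκ
      rw [hA, mem_filter, Fintype.mem_piFinset] at hκA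
      have hker : ∀ a b : Fin n, b ∈ p.part a ↔ κ a = κ b := by
        intro a b
        rw [← hκp]
        exact mem_ker_part κ a b
      refine ⟨fun t => κ (p.nonempty_of_mem_parts t.2).choose, ?_, ?_⟩
      · rw [mem_filter, Fintype.mem_piFinset]
        refine ⟨fun t => hκA.1 _, ?_⟩
        intro t t' htt'
        set x := (p.nonempty_of_mem_parts t.2).choose with hx
        set y := (p.nonempty_of_mem_parts t'.2).choose with hy
        have hxt : x ∈ t.1 := (p.nonempty_of_mem_parts t.2).choose_spec
        have hyt : y ∈ t'.1 := (p.nonempty_of_mem_parts t'.2).choose_spec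
        have hxy : x ≠ y := by
          intro h
          exact htt' (Subtype.ext (p.eq_of_mem_parts t.2 t'.2 hxt (h ▸ hyt)))
        constructor
        · intro hcon
          have : y ∈ p.part x := (hker x y).mpr hcon
          rw [p.part_eq_of_mem t.2 hxt] at this
          exact htt' (Subtype.ext (p.eq_of_mem_parts t.2 t'.2 this hyt))
        · exact hκA.2 x y hxy
      · funext a
        have hch : (p.nonempty_of_mem_parts (p.part_mem.2 (mem_univ a))).choose ∈ p.part a :=
          (p.nonempty_of_mem_parts (p.part_mem.2 (mem_univ a))).choose_spec
        exact ((hker a _).mp hch).symm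
  have fiber2 : ∀ p : Finpartition (univ : Finset (Fin n)),
      ((A.filter (fun κ => ker κ = p)).card : ℤ) = fallFac2 C.card p.parts.card := by
    intro p
    rw [fiber p]
    exact labelCount_eq C h0 hsym _ _ (Fintype.card_coe _)
  have hmaps : ∀ p : Finpartition (univ : Finset (Fin n)), p ∈ (univ : Finset _) →
      p.parts.card ∈ Finset.range (n+1) := by
    intro p _
    rw [Finset.mem_range]
    have := p.card_parts_le_card
    simp only [Finset.card_univ, Fintype.card_fin] at this
    omega
  have hGA : goodCount (Fin n) C = A.card := by
    rw [hA, goodCount]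
    congr 1
    apply Finset.filter_congr_decidable
  calc (goodCount (Fin n) C : ℤ)
      = ∑ p ∈ (univ : Finset (Finpartition (univ : Finset (Fin n)))),
          ((A.filter (fun κ => ker κ = p)).card : ℤ) := by
        rw [hGA, key]; push_cast; rfl
    _ = ∑ p ∈ (univ : Finset (Finpartition (univ : Finset (Fin n)))),
          fallFac2 C.card p.parts.card := Finset.sum_congr rfl (fun p _ => fiber2 p)
    _ = ∑ i ∈ Finset.range (n+1), ∑ p ∈ (univ : Finset (Finpartition (univ : Finset (Fin n)))).filter
          (fun p => p.parts.card = i), fallFac2 C.card p.parts.card :=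
        (Finset.sum_fiberwise_of_maps_to hmaps _).symm
    _ = ∑ i ∈ Finset.range (n+1),
          (((univ : Finset (Finpartition (univ : Finset (Fin n)))).filter
              fun p => p.parts.card = i).card : ℤ) * fallFac2 C.card i := by
        refine Finset.sum_congr rfl (fun i _ => ?_)
        rw [Finset.sum_congr rfl (fun p hp => by
          rw [(Finset.mem_filter.mp hp).2]), Finset.sum_const, nsmul_eq_mul]





lemma goodCount_congr {β γ : Type} [Fintype β] [DecidableEq β] [Fintype γ] [DecidableEq γ]
    (e : β ≃ γ) (C : Finset ℤ) : goodCount β C = goodCount γ C := by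
  unfold goodCount
  refine Finset.card_nbij' (fun κ => κ ∘ e.symm) (fun κ => κ ∘ e) ?_ ?_ ?_ ?_
  · intro κ hκ
    rw [Finset.mem_coe, mem_filter, Fintype.mem_piFinset] at hκ ⊢
    exact ⟨fun x => hκ.1 _, fun u v huv =>
      hκ.2 _ _ (fun h => huv (by simpa using congrArg e h))⟩
  · intro κ hκ
    rw [Finset.mem_coe, mem_filter, Fintype.mem_piFinset] at hκ ⊢
    exact ⟨fun x => hκ.1 _, fun u v huv =>
      hκ.2 _ _ (fun h => huv (e.injective h))⟩
  · intro κ _; funext x; simp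
  · intro κ _; funext x; simp

lemma card_ne (n : ℕ) (v : Fin n) : Fintype.card {u : Fin n // u ≠ v} = n - 1 := by
  have h1 : Fintype.card {x : Fin n // x = v} = 1 := Fintype.card_subtype_eq v
  have h2 := Fintype.card_subtype_compl (fun x : Fin n => x = v)
  rw [h1, Fintype.card_fin] at h2
  have h3 : Fintype.card {u : Fin n // u ≠ v} = Fintype.card {x : Fin n // ¬ x = v} :=
    Fintype.card_congr (Equiv.subtypeEquivRight (by simp))
  omega

lemma goodCount_odd_split (n : ℕ) (C : Finset ℤ) (h0 : (0:ℤ) ∈ C) :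
    goodCount (Fin n) C
      = goodCount (Fin n) (C.erase 0) + n * goodCount (Fin (n-1)) (C.erase 0) := by
  set C₀ := C.erase 0 with hC₀
  set S := ((Fintype.piFinset fun _ : Fin n => C).filter
    fun κ => ∀ u v : Fin n, u ≠ v → κ u ≠ -κ v) with hS
  have hsplit := Finset.card_filter_add_card_filter_not
    (s := S) (p := fun κ => ∀ v : Fin n, κ v ≠ 0)
  have hGS : goodCount (Fin n) C = S.card := by
    rw [hS, goodCount]; congr 1; apply Finset.filter_congr_decidable
  -- part (a)
  have ha : (S.filter fun κ => ∀ v : Fin n, κ v ≠ 0).card = goodCount (Fin n) C₀ := by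
    rw [goodCount]
    apply congrArg Finset.card
    ext κ
    simp only [hS, mem_filter, Fintype.mem_piFinset]
    constructor
    · rintro ⟨⟨hmem, hgood⟩, hne⟩
      exact ⟨fun v => Finset.mem_erase.mpr ⟨hne v, hmem v⟩, hgood⟩
    · rintro ⟨hmem, hgood⟩
      exact ⟨⟨fun v => (Finset.mem_erase.mp (hmem v)).2, hgood⟩,
        fun v => (Finset.mem_erase.mp (hmem v)).1⟩
  -- part (b)
  have hb1 : (S.filter fun κ => ¬ ∀ v : Fin n, κ v ≠ 0)
      = (univ : Finset (Fin n)).biUnion (fun v => S.filter (fun κ => κ v = 0)) := by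
    ext κ
    rw [mem_filter, Finset.mem_biUnion]
    push_neg
    constructor
    · rintro ⟨hκ, v, hv⟩; exact ⟨v, mem_univ v, Finset.mem_filter.mpr ⟨hκ, hv⟩⟩
    · rintro ⟨v, _, hv⟩
      rw [mem_filter] at hv
      exact ⟨hv.1, v, hv.2⟩
  have hdisj : ∀ u ∈ (univ : Finset (Fin n)), ∀ v ∈ (univ : Finset (Fin n)), u ≠ v →
      Disjoint (S.filter (fun κ => κ u = 0)) (S.filter (fun κ => κ v = 0)) := by
    intro u _ v _ huv
    rw [Finset.disjoint_left]
    intro κ hκu hκv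
    rw [mem_filter] at hκu hκv
    have hgood : ∀ a b : Fin n, a ≠ b → κ a ≠ -κ b := by
      have := hκu.1; rw [hS, mem_filter] at this; exact this.2
    exact hgood u v huv (by rw [hκu.2, hκv.2]; ring)
  have hb2 : ∀ v : Fin n, (S.filter (fun κ => κ v = 0)).card = goodCount (Fin (n-1)) C₀ := by
    intro v
    have step1 : (S.filter (fun κ => κ v = 0)).card = goodCount {u : Fin n // u ≠ v} C₀ := by
      rw [goodCount]
      refine Finset.card_nbij' (fun κ => fun u : {u : Fin n // u ≠ v} => κ u.1)
        (fun g => fun u : Fin n => if h : u = v then 0 else g ⟨u, h⟩) ?_ ?_ ?_ ?_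
      · intro κ hκ
        rw [Finset.mem_coe, mem_filter, hS, mem_filter, Fintype.mem_piFinset] at hκ
        obtain ⟨⟨hmem, hgood⟩, hv0⟩ := hκ
        rw [Finset.mem_coe, mem_filter, Fintype.mem_piFinset]
        refine ⟨fun u => Finset.mem_erase.mpr ⟨?_, hmem u.1⟩,
          fun u w huw => hgood u.1 w.1 (fun h => huw (Subtype.ext h))⟩
        intro hz
        have hz' : κ u.1 = 0 := hz
        exact hgood u.1 v u.2 (by rw [hz', hv0]; ring)
      · intro g hg
        rw [Finset.mem_coe, mem_filter, Fintype.mem_piFinset] at hg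
        obtain ⟨hmem, hgood⟩ := hg
        rw [Finset.mem_coe, mem_filter, hS, mem_filter, Fintype.mem_piFinset]
        refine ⟨⟨?_, ?_⟩, by simp⟩
        · intro u
          by_cases h : u = v
          · simp [h, h0]
          · simp only [dif_neg h]
            exact (Finset.mem_erase.mp (hmem ⟨u, h⟩)).2
        · intro a b hab
          by_cases hA : a = v <;> by_cases hB : b = v
          · exact absurd (hA.trans hB.symm) hab
          · subst hA
            simp only [dif_pos, dif_neg hB]
            have := (Finset.mem_erase.mp (hmem ⟨b, hB⟩)).1
            intro hcon
            exact this (by linarith)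
          · subst hB
            simp only [dif_pos, dif_neg hA]
            simpa using (Finset.mem_erase.mp (hmem ⟨a, hA⟩)).1
          · simp only [dif_neg hA, dif_neg hB]
            exact hgood ⟨a, hA⟩ ⟨b, hB⟩ (fun h => hab (congrArg Subtype.val h))
      · intro κ hκ
        rw [Finset.mem_coe, mem_filter] at hκ
        funext u
        by_cases h : u = v
        · simp [h, hκ.2]
        · simp [h]
      · intro g _
        funext u
        simp [u.2]
    rw [step1]
    exact goodCount_congr (Fintype.equivFinOfCardEq (card_ne n v)) C₀
  have hb : (S.filter fun κ => ¬ ∀ v : Fin n, κ v ≠ 0).card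
      = n * goodCount (Fin (n-1)) C₀ := by
    rw [hb1, Finset.card_biUnion hdisj]
    refine (Finset.sum_congr rfl fun v _ => hb2 v).trans ?_
    rw [Finset.sum_const, smul_eq_mul, Finset.card_univ, Fintype.card_fin]
  rw [hGS, ← hsplit, ha, hb]







lemma stirling2_eq_filter (n i : ℕ) :
    stirling2 n i = ((univ : Finset (Finpartition (univ : Finset (Fin n)))).filter
      fun p => p.parts.card = i).card := by
  rw [stirling2, Nat.card_eq_fintype_card, Fintype.card_subtype]

lemma H_natCast (n : ℕ) (x : ℤ) :
    H (n : ℤ) x = ∑ i ∈ Finset.range (n + 1), (stirling2 n i : ℤ) * fallFac2 x i := by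
  rw [H, if_neg (by omega), Int.toNat_natCast]

lemma goodCount_H (n : ℕ) (C : Finset ℤ) (h0 : (0:ℤ) ∉ C) (hsym : ∀ x ∈ C, -x ∈ C) :
    (goodCount (Fin n) C : ℤ) = H (n : ℤ) (C.card : ℤ) := by
  rw [H_natCast, goodCount_fin n C h0 hsym]
  exact Finset.sum_congr rfl fun i _ => by rw [stirling2_eq_filter]

-- colour set facts
lemma even_colour (k : ℕ) :
    ((Finset.Icc (-(k:ℤ)) k).erase 0).card = 2 * k ∧ (0:ℤ) ∉ (Finset.Icc (-(k:ℤ)) k).erase 0 ∧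
      ∀ x ∈ (Finset.Icc (-(k:ℤ)) k).erase 0, -x ∈ (Finset.Icc (-(k:ℤ)) k).erase 0 := by
  refine ⟨?_, Finset.notMem_erase _ _, ?_⟩
  · rw [Finset.card_erase_of_mem (by rw [Finset.mem_Icc]; omega), Int.card_Icc]
    omega
  · intro x hx
    rw [Finset.mem_erase, Finset.mem_Icc] at hx ⊢
    omega


end Aux

open SignedPaper in
/-- the chromatic polynomials of the all-negative complete graph `−K_n`. -/
theorem stmt_5 (n : ℕ) (σ : Sym2 (Fin n) → ℤ) (hσ : ∀ e, σ e = -1) :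
    (∀ lam : ℕ, Even lam →
      (signedCount (⊤ : SimpleGraph (Fin n)) σ lam : ℤ) = H (n : ℤ) (lam : ℤ)) ∧
    (∀ lam : ℕ, Odd lam →
      (signedCount (⊤ : SimpleGraph (Fin n)) σ lam : ℤ) =
        H (n : ℤ) ((lam : ℤ) - 1) + (n : ℤ) * H ((n : ℤ) - 1) ((lam : ℤ) - 1)) := by
  have hsc : ∀ lam : ℕ, signedCount (⊤ : SimpleGraph (Fin n)) σ lam
      = Aux.goodCount (Fin n) (colourSet lam) := by
    intro lam
    rw [signedCount, properCount]
    have hset : ProperColourings (⊤ : SimpleGraph (Fin n)) σ (colourSet lam)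
        = ↑((Fintype.piFinset fun _ : Fin n => colourSet lam).filter
            fun κ => ∀ u v : Fin n, u ≠ v → κ u ≠ -κ v) := by
      ext κ
      simp only [ProperColourings, Set.mem_setOf_eq, Finset.coe_filter, Fintype.mem_piFinset,
        SimpleGraph.top_adj]
      constructor
      · rintro ⟨h1, h2⟩
        exact ⟨h1, fun u v huv => by have := h2 u v huv; rwa [hσ, neg_one_mul] at this⟩
      · rintro ⟨h1, h2⟩
        exact ⟨h1, fun u v huv => by rw [hσ, neg_one_mul]; exact h2 u v huv⟩
    rw [hset, Set.ncard_coe_finset, Aux.goodCount]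
    congr 1
    ext κ
    simp only [Finset.mem_filter]
  have stirl : ∀ m i : ℕ, stirling2 m i
      = ((univ : Finset (Finpartition (univ : Finset (Fin m)))).filter
        fun p => p.parts.card = i).card := by
    intro m i
    rw [stirling2, Nat.card_eq_fintype_card, Fintype.card_subtype]
  have H_natCast : ∀ (m : ℕ) (x : ℤ),
      H (m : ℤ) x = ∑ i ∈ Finset.range (m + 1), (stirling2 m i : ℤ) * fallFac2 x i := by
    intro m x
    rw [H, if_neg (by omega), Int.toNat_natCast]
  have goodH : ∀ (m : ℕ) (C : Finset ℤ), (0:ℤ) ∉ C → (∀ x ∈ C, -x ∈ C) →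
      (Aux.goodCount (Fin m) C : ℤ) = H (m : ℤ) (C.card : ℤ) := by
    intro m C h0 hsym
    rw [H_natCast, Aux.goodCount_fin m C h0 hsym]
    exact Finset.sum_congr rfl fun i _ => by rw [stirl]
  have ecol : ∀ k : ℕ, ((Finset.Icc (-(k:ℤ)) k).erase 0).card = 2 * k ∧
      (0:ℤ) ∉ (Finset.Icc (-(k:ℤ)) k).erase 0 ∧
      ∀ x ∈ (Finset.Icc (-(k:ℤ)) k).erase 0, -x ∈ (Finset.Icc (-(k:ℤ)) k).erase 0 := by
    intro k
    refine ⟨?_, Finset.notMem_erase _ _, ?_⟩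
    · rw [Finset.card_erase_of_mem (by rw [Finset.mem_Icc]; omega), Int.card_Icc]
      omega
    · intro x hx
      rw [Finset.mem_erase, Finset.mem_Icc] at hx ⊢
      omega
  constructor
  · intro lam hlam
    obtain ⟨k, hk⟩ := hlam
    have hC : colourSet lam = (Finset.Icc (-(k:ℤ)) k).erase 0 := by
      rw [colourSet, if_pos ⟨k, hk⟩]
      have : ((lam : ℤ)) / 2 = (k : ℤ) := by subst hk; push_cast; omega
      rw [this]
    obtain ⟨hcard, h0, hsym⟩ := ecol k
    rw [hsc lam, hC, goodH n _ h0 hsym, hcard]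
    congr 1
    push_cast
    omega
  · intro lam hlam
    have hne : ¬ Even lam := Nat.not_even_iff_odd.mpr hlam
    obtain ⟨k, hk⟩ := hlam
    have hC : colourSet lam = Finset.Icc (-(k:ℤ)) k := by
      rw [colourSet, if_neg hne]
      have : ((lam : ℤ)) / 2 = (k : ℤ) := by subst hk; push_cast; omega
      rw [this]
    obtain ⟨hcard, h0, hsym⟩ := ecol k
    have hsplit := Aux.goodCount_odd_split n (Finset.Icc (-(k:ℤ)) k)
      (by rw [Finset.mem_Icc]; omega)
    rw [hsc lam, hC, hsplit]
    push_cast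
    have e1 : (Aux.goodCount (Fin n) ((Finset.Icc (-(k:ℤ)) k).erase 0) : ℤ)
        = H (n:ℤ) ((lam:ℤ) - 1) := by
      rw [goodH n _ h0 hsym, hcard]
      congr 1
      push_cast
      omega
    have e2 : (n:ℤ) * (Aux.goodCount (Fin (n-1)) ((Finset.Icc (-(k:ℤ)) k).erase 0) : ℤ)
        = (n:ℤ) * H ((n:ℤ) - 1) ((lam:ℤ) - 1) := by
      cases n with
      | zero => simp
      | succ m =>
        congr 1
        rw [Nat.succ_sub_one, goodH m _ h0 hsym, hcard]
        congr 1
        · push_cast; ring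
        · push_cast; omega
    rw [e1, e2]
end

section
/- Let m, n ≥ 0 be integers and let Σ = (+K_m) ∨₊ (−K_n) be the signed complete graph on vertex set V₂ ⊔ V₃ with |V₂| = m, |V₃| = n, in which an edge is negative exactly when both its endpoints lie in V₃, and positive otherwise. Then for every even integer λ ≥ 0, f(Σ, λ) = H₁(0, m, n, λ) = Σ_{j=0}^{n} S(n,j)·₂(λ)_j·(λ−j)_m, and for every odd integer λ ≥ 1, f(Σ, λ) = H₁(0, m, n, λ−1) + m·H₁(0, m−1, n, λ−1) + n·H₁(0, m, n−1, λ−1). -/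
open Finset

namespace SignedPaper

/-- Signature of `(+K_m) ∨₊ (−K_n)` on `Fin m ⊕ Fin n`: an edge is negative exactly
when both endpoints lie in `V₃` (the right summand). -/
def sig01 {m n : ℕ} : Sym2 (Fin m ⊕ Fin n) → ℤ :=
  Sym2.lift ⟨fun v w => if v.isRight = true ∧ w.isRight = true then -1 else 1,
    by
      intro v w
      have h : (v.isRight = true ∧ w.isRight = true) ↔
          (w.isRight = true ∧ v.isRight = true) := by tauto
      exact if_congr h rfl rfl⟩

end SignedPaper

namespace SignedPaper

open Function Finset

lemma fallFac_succ (x : ℤ) (m : ℕ) : fallFac x (m+1) = fallFac x m * (x - m) :=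
  Finset.prod_range_succ _ _

lemma fallFac2_succ (x : ℤ) (m : ℕ) : fallFac2 x (m+1) = fallFac2 x m * (x - 2*m) :=
  Finset.prod_range_succ _ _

lemma cast_descFactorial (s m : ℕ) : ((s.descFactorial m : ℤ)) = fallFac (s : ℤ) m := by
  rcases le_or_gt m s with h | h
  · rw [Nat.descFactorial_eq_prod_range, fallFac, Nat.cast_prod]
    refine Finset.prod_congr rfl fun i hi => ?_
    rw [Finset.mem_range] at hi
    have hi' : i ≤ s := le_trans hi.le h
    push_cast [hi']
    ring
  · rw [Nat.descFactorial_eq_zero_iff_lt.2 h, fallFac, eq_comm, Nat.cast_zero]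
    exact Finset.prod_eq_zero (Finset.mem_range.2 h) (sub_self _)

lemma card_injInto (S : Finset ℤ) (m : ℕ) :
    Nat.card {f : Fin m → ℤ // (∀ a, f a ∈ S) ∧ Function.Injective f}
      = S.card.descFactorial m := by
  have e : {f : Fin m → ℤ // (∀ a, f a ∈ S) ∧ Function.Injective f} ≃ (Fin m ↪ ↥S) :=
    { toFun := fun f => ⟨fun i => ⟨f.1 i, f.2.1 i⟩, fun i j h => f.2.2 (congrArg Subtype.val h)⟩
      invFun := fun g => ⟨fun i => (g i : ℤ),
        ⟨fun i => (g i).2, fun i j h => g.injective (Subtype.ext h)⟩⟩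
      left_inv := fun f => rfl
      right_inv := fun g => by ext i; rfl }
  rw [Nat.card_congr e, Nat.card_eq_fintype_card, Fintype.card_embedding_eq, Fintype.card_fin,
    Fintype.card_coe]

/-- antipodal-free injections into `S`. -/
def Antip (S : Finset ℤ) {J : Type*} (φ : J → ℤ) : Prop :=
  (∀ t, φ t ∈ S) ∧ (∀ t t', φ t ≠ -φ t') ∧ Function.Injective φ

lemma antip_finite (S : Finset ℤ) (J : Type*) [Finite J] :
    Finite {φ : J → ℤ // Antip S φ} := by
  refine Finite.of_injective (fun φ => (fun i => (⟨φ.1 i, φ.2.1 i⟩ : ↥S) : J → ↥S)) ?_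
  intro φ ψ h
  exact Subtype.ext (funext fun i => congrArg Subtype.val (congrFun h i))

lemma card_antip_fin (S : Finset ℤ) (h0 : (0:ℤ) ∉ S) (hs : ∀ x ∈ S, -x ∈ S) (j : ℕ) :
    (Nat.card {φ : Fin j → ℤ // Antip S φ} : ℤ) = fallFac2 (S.card) j := by
  induction j with
  | zero =>
    haveI : Unique {φ : Fin 0 → ℤ // Antip S φ} :=
      { default := ⟨fun i => i.elim0, fun i => i.elim0, fun i => i.elim0, fun i => i.elim0⟩
        uniq := fun φ => Subtype.ext (funext fun i => i.elim0) }
    rw [Nat.card_unique]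
    simp [fallFac2]
  | succ j ih =>
    classical
    haveI : Finite {ψ : Fin j → ℤ // Antip S ψ} := antip_finite S _
    haveI F1 : Fintype {ψ : Fin j → ℤ // Antip S ψ} := Fintype.ofFinite _
    set T : (Fin j → ℤ) → Finset ℤ :=
      fun ψ => (Finset.image ψ Finset.univ) ∪ (Finset.image (fun i => -ψ i) Finset.univ) with hT
    have key : Nat.card {φ : Fin (j+1) → ℤ // Antip S φ}
        = Nat.card (Σ ψ : {ψ : Fin j → ℤ // Antip S ψ}, {c : ℤ // c ∈ S \ T ψ.1}) := by
      refine (Nat.card_eq_of_bijective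
        (fun x => (⟨Fin.snoc x.1.1 x.2.1, ?_, ?_, ?_⟩ :
          {φ : Fin (j+1) → ℤ // Antip S φ})) ⟨?_, ?_⟩).symm
      · -- values
        obtain ⟨⟨ψ, hv, ha, hi⟩, c, hc⟩ := x
        show ∀ t, (Fin.snoc ψ c : Fin (j+1) → ℤ) t ∈ S
        intro t
        refine Fin.lastCases ?_ (fun i => ?_) t
        · rw [Fin.snoc_last]; exact (Finset.mem_sdiff.1 hc).1
        · rw [Fin.snoc_castSucc]; exact hv i
      · -- antipodal
        obtain ⟨⟨ψ, hv, ha, hi⟩, c, hc⟩ := x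
        have hc' := Finset.mem_sdiff.1 hc
        have hcim : ∀ i, c ≠ ψ i ∧ c ≠ -ψ i := by
          intro i
          constructor <;> intro h <;> apply hc'.2 <;> rw [hT]
          · exact Finset.mem_union_left _ (Finset.mem_image.2 ⟨i, Finset.mem_univ i, h.symm⟩)
          · exact Finset.mem_union_right _ (Finset.mem_image.2 ⟨i, Finset.mem_univ i, h.symm⟩)
        show ∀ t t', (Fin.snoc ψ c : Fin (j+1) → ℤ) t ≠ -(Fin.snoc ψ c : Fin (j+1) → ℤ) t'
        intro t t'
        refine Fin.lastCases ?_ (fun i => ?_) t <;> refine Fin.lastCases ?_ (fun i' => ?_) t'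
        · rw [Fin.snoc_last]
          intro h
          have hc0 : c = 0 := by omega
          exact h0 (hc0 ▸ hc'.1)
        · rw [Fin.snoc_last, Fin.snoc_castSucc]
          exact (hcim i').2
        · rw [Fin.snoc_last, Fin.snoc_castSucc]
          intro h
          exact (hcim i).2 (by omega)
        · rw [Fin.snoc_castSucc, Fin.snoc_castSucc]
          exact ha i i'
      · -- injective (of snoc function)
        obtain ⟨⟨ψ, hv, ha, hi⟩, c, hc⟩ := x
        have hc' := Finset.mem_sdiff.1 hc
        have hcim : ∀ i, c ≠ ψ i := by
          intro i h
          exact hc'.2 (Finset.mem_union_left _ (Finset.mem_image.2 ⟨i, Finset.mem_univ i, h.symm⟩))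
        show Function.Injective (Fin.snoc ψ c : Fin (j+1) → ℤ)
        intro t t'
        refine Fin.lastCases ?_ (fun i => ?_) t <;> refine Fin.lastCases ?_ (fun i' => ?_) t'
        · intro _; rfl
        · intro h
          rw [Fin.snoc_last, Fin.snoc_castSucc] at h
          exact absurd h (hcim i')
        · intro h
          rw [Fin.snoc_last, Fin.snoc_castSucc] at h
          exact absurd h.symm (hcim i)
        · intro h
          rw [Fin.snoc_castSucc, Fin.snoc_castSucc] at h
          exact congrArg Fin.castSucc (hi h)
      · -- injective (of the global map)
        rintro ⟨⟨ψ, hψ⟩, c, hc⟩ ⟨⟨ψ', hψ'⟩, c', hc'⟩ h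
        have h' : (Fin.snoc ψ c : Fin (j+1) → ℤ) = (Fin.snoc ψ' c' : Fin (j+1) → ℤ) := by exact congrArg Subtype.val h
        have h1 : ψ = ψ' := by
          funext i
          have := congrFun h' i.castSucc
          rwa [Fin.snoc_castSucc, Fin.snoc_castSucc] at this
        subst h1
        have h2 : c = c' := by
          have := congrFun h' (Fin.last j)
          rwa [Fin.snoc_last, Fin.snoc_last] at this
        subst h2
        rfl
      · -- surjective
        rintro ⟨φ, hv, ha, hi⟩
        have hψ : Antip S (fun i : Fin j => φ i.castSucc) :=
          ⟨fun i => hv _, fun i i' => ha _ _, fun i i' h => Fin.castSucc_injective _ (hi h)⟩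
        have hcmem : φ (Fin.last j) ∈ S \ T (fun i : Fin j => φ i.castSucc) := by
          rw [Finset.mem_sdiff]
          refine ⟨hv _, ?_⟩
          rw [hT]
          simp only [Finset.mem_union, Finset.mem_image, Finset.mem_univ, true_and, not_or,
            not_exists]
          constructor
          · rintro i h
            exact absurd (hi h.symm) (Fin.castSucc_lt_last i).ne'
          · rintro i h
            exact ha (Fin.last j) i.castSucc h.symm
        refine ⟨⟨⟨fun i => φ i.castSucc, hψ⟩, ⟨φ (Fin.last j), hcmem⟩⟩, ?_⟩
        apply Subtype.ext
        exact Fin.snoc_init_self φ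
    rw [key, Nat.card_eq_fintype_card, Fintype.card_sigma]
    have hTS : ∀ ψ : {ψ : Fin j → ℤ // Antip S ψ}, T ψ.1 ⊆ S ∧ (T ψ.1).card = 2*j := by
      rintro ⟨ψ, hv, ha, hi⟩
      have him : Finset.image ψ univ ⊆ S := by
        intro x hx; obtain ⟨i, -, rfl⟩ := Finset.mem_image.1 hx; exact hv i
      have him' : Finset.image (fun i => -ψ i) univ ⊆ S := by
        intro x hx; obtain ⟨i, -, rfl⟩ := Finset.mem_image.1 hx; exact hs _ (hv i)
      have hdisj : Disjoint (Finset.image ψ univ) (Finset.image (fun i => -ψ i) univ) := by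
        rw [Finset.disjoint_left]
        rintro x hx hx'
        obtain ⟨i, -, rfl⟩ := Finset.mem_image.1 hx
        obtain ⟨i', -, hi'⟩ := Finset.mem_image.1 hx'
        exact ha i i' hi'.symm
      refine ⟨Finset.union_subset him him', ?_⟩
      rw [Finset.card_union_of_disjoint hdisj, Finset.card_image_of_injective _ hi,
        Finset.card_image_of_injective _ (fun a b hab => hi (neg_injective hab)),
        Finset.card_univ, Fintype.card_fin]
      ring
    have hconst : ∀ ψ : {ψ : Fin j → ℤ // Antip S ψ},
        Fintype.card {c : ℤ // c ∈ S \ T ψ.1} = S.card - 2*j := by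
      intro ψ
      rw [← Nat.card_eq_fintype_card, Nat.card_eq_finsetCard,
        Finset.card_sdiff_of_subset (hTS ψ).1, (hTS ψ).2]
    rw [Finset.sum_congr rfl (fun ψ _ => hconst ψ), Finset.sum_const, smul_eq_mul,
      Finset.card_univ, fallFac2_succ, ← ih, ← Nat.card_eq_fintype_card]
    by_cases hE : Nonempty {ψ : Fin j → ℤ // Antip S ψ}
    · obtain ⟨ψ⟩ := hE
      have h2j : 2*j ≤ S.card := by
        have h1 := Finset.card_le_card (hTS ψ).1
        rwa [(hTS ψ).2] at h1
      push_cast [h2j]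
      ring
    · rw [not_nonempty_iff] at hE
      rw [Nat.card_of_isEmpty]
      simp

lemma card_antip (S : Finset ℤ) (h0 : (0:ℤ) ∉ S) (hs : ∀ x ∈ S, -x ∈ S) (J : Type*)
    [Fintype J] :
    (Nat.card {φ : J → ℤ // Antip S φ} : ℤ) = fallFac2 (S.card) (Fintype.card J) := by
  classical
  rw [← card_antip_fin S h0 hs (Fintype.card J)]
  congr 1
  refine Nat.card_congr ⟨fun φ => ⟨φ.1 ∘ (Fintype.equivFin J).symm, fun t => φ.2.1 _,
    fun t t' => φ.2.2.1 _ _,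
    fun t t' h => (Fintype.equivFin J).symm.injective (φ.2.2.2 h)⟩,
    fun φ => ⟨φ.1 ∘ (Fintype.equivFin J), fun t => φ.2.1 _, fun t t' => φ.2.2.1 _ _,
    fun t t' h => (Fintype.equivFin J).injective (φ.2.2.2 h)⟩, ?_, ?_⟩
  · intro φ; apply Subtype.ext; funext t; simp
  · intro φ; apply Subtype.ext; funext t; simp

end SignedPaper
namespace SignedPaper

open Function Finset

/-- proper colourings of `−K_n` with colours in `C`. -/
def PropR (C : Finset ℤ) {n : ℕ} (κ : Fin n → ℤ) : Prop :=
  (∀ b, κ b ∈ C) ∧ ∀ b b', b ≠ b' → κ b ≠ -κ b'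

lemma propR_finite (C : Finset ℤ) (n : ℕ) : Finite {κ : Fin n → ℤ // PropR C κ} := by
  refine Finite.of_injective (fun κ => (fun b => (⟨κ.1 b, κ.2.1 b⟩ : ↥C) : Fin n → ↥C)) ?_
  intro κ κ' h
  exact Subtype.ext (funext fun b => congrArg Subtype.val (congrFun h b))

lemma parts_eq_image_part {n : ℕ} (p : Finpartition (univ : Finset (Fin n))) :
    p.parts = Finset.image p.part univ := by
  ext t
  simp only [Finset.mem_image, Finset.mem_univ, true_and]
  constructor
  · intro ht
    obtain ⟨b, hb⟩ := p.nonempty_of_mem_parts ht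
    exact ⟨b, p.part_eq_of_mem ht hb⟩
  · rintro ⟨b, rfl⟩
    exact p.part_mem.2 (Finset.mem_univ b)

variable {C : Finset ℤ} {n : ℕ}

/-- from a partition plus an antipodal-free injection, build a right colouring. -/
def Phi (C : Finset ℤ) (n : ℕ)
    (x : Σ p : Finpartition (univ : Finset (Fin n)), {φ : ↥p.parts → ℤ // Antip C φ}) :
    Fin n → ℤ :=
  fun b => x.2.1 ⟨x.1.part b, x.1.part_mem.2 (Finset.mem_univ b)⟩

lemma Phi_propR (x : Σ p : Finpartition (univ : Finset (Fin n)), {φ : ↥p.parts → ℤ // Antip C φ}) :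
    PropR C (Phi C n x) :=
  ⟨fun b => x.2.2.1 _, fun b b' _ => x.2.2.2.1 _ _⟩

lemma Phi_image_card
    (x : Σ p : Finpartition (univ : Finset (Fin n)), {φ : ↥p.parts → ℤ // Antip C φ}) :
    (Finset.image (Phi C n x) univ).card = x.1.parts.card := by
  obtain ⟨p, φ, hφ⟩ := x
  have him : Finset.image (Phi C n ⟨p, φ, hφ⟩) univ
      = Finset.image (fun t : ↥p.parts => φ t) univ := by
    ext c
    simp only [Finset.mem_image, Finset.mem_univ, true_and]
    constructor
    · rintro ⟨b, rfl⟩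
      exact ⟨⟨p.part b, p.part_mem.2 (Finset.mem_univ b)⟩, rfl⟩
    · rintro ⟨t, rfl⟩
      obtain ⟨b, hb⟩ := p.nonempty_of_mem_parts t.2
      refine ⟨b, ?_⟩
      show φ ⟨p.part b, _⟩ = φ t
      congr 1
      exact Subtype.ext (p.part_eq_of_mem t.2 hb)
  rw [him, Finset.card_image_of_injective _ hφ.2.2, Finset.card_univ, Fintype.card_coe]

lemma Phi_part_eq
    (x : Σ p : Finpartition (univ : Finset (Fin n)), {φ : ↥p.parts → ℤ // Antip C φ})
    (b b' : Fin n) : Phi C n x b' = Phi C n x b ↔ x.1.part b' = x.1.part b := by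
  obtain ⟨p, φ, hφ⟩ := x
  constructor
  · intro h
    have := hφ.2.2 h
    exact congrArg Subtype.val this
  · intro h
    show φ _ = φ _
    congr 1
    exact Subtype.ext h

lemma Phi_bijective (h0 : (0:ℤ) ∉ C) :
    Function.Bijective
      (fun x : Σ p : Finpartition (univ : Finset (Fin n)), {φ : ↥p.parts → ℤ // Antip C φ} =>
        (⟨Phi C n x, Phi_propR x⟩ : {κ : Fin n → ℤ // PropR C κ})) := by
  constructor
  · rintro ⟨p, φ, hφ⟩ ⟨q, ψ, hψ⟩ h
    have hfun : Phi C n ⟨p, φ, hφ⟩ = Phi C n ⟨q, ψ, hψ⟩ := congrArg Subtype.val h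
    have hpart : ∀ b, p.part b = q.part b := by
      intro b
      ext b'
      rw [p.mem_part_iff_part_eq_part (Finset.mem_univ b') (Finset.mem_univ b),
        q.mem_part_iff_part_eq_part (Finset.mem_univ b') (Finset.mem_univ b),
        ← Phi_part_eq ⟨p, φ, hφ⟩ b b', ← Phi_part_eq ⟨q, ψ, hψ⟩ b b', hfun]
    have hpq : p = q := by
      ext1
      rw [parts_eq_image_part, parts_eq_image_part]
      exact Finset.image_congr (fun b _ => hpart b)
    subst hpq
    have hφψ : φ = ψ := by
      funext t
      obtain ⟨b, hb⟩ := p.nonempty_of_mem_parts t.2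
      have h1 : t = ⟨p.part b, p.part_mem.2 (Finset.mem_univ b)⟩ :=
        Subtype.ext (p.part_eq_of_mem t.2 hb).symm
      rw [h1]
      exact congrFun hfun b
    subst hφψ
    rfl
  · rintro ⟨κ, hκv, hκp⟩
    haveI : DecidableRel (Setoid.ker κ).r := fun a b => decidable_of_iff (κ a = κ b) Iff.rfl
    set p := Finpartition.ofSetoid (Setoid.ker κ) with hp
    have key : ∀ a b : Fin n, b ∈ p.part a ↔ κ a = κ b := fun a b =>
      Finpartition.mem_part_ofSetoid_iff_rel
    have hne : ∀ t : ↥p.parts, t.1.Nonempty := fun t => p.nonempty_of_mem_parts t.2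
    set φ : ↥p.parts → ℤ := fun t => κ (t.1.min' (hne t)) with hφdef
    have hself : ∀ b, κ ((p.part b).min' (hne ⟨p.part b, p.part_mem.2 (Finset.mem_univ b)⟩)) = κ b := by
      intro b
      have hm := Finset.min'_mem (p.part b) (hne ⟨p.part b, p.part_mem.2 (Finset.mem_univ b)⟩)
      exact ((key b _).1 hm).symm
    have hφ : Antip C φ := by
      refine ⟨fun t => hκv _, ?_, ?_⟩
      · intro t t'
        by_cases hxy : t.1.min' (hne t) = t'.1.min' (hne t')
        · rw [hφdef]
          simp only [hxy]
          intro h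
          have h0' : κ (t'.1.min' (hne t')) = 0 := by omega
          exact h0 (h0' ▸ hκv (t'.1.min' (hne t')))
        · exact hκp _ _ hxy
      · intro t t' h
        have h1 : t.1 = p.part (t.1.min' (hne t)) :=
          (p.part_eq_of_mem t.2 (Finset.min'_mem _ _)).symm
        have h2 : t'.1 = p.part (t'.1.min' (hne t')) :=
          (p.part_eq_of_mem t'.2 (Finset.min'_mem _ _)).symm
        have h3 : p.part (t.1.min' (hne t)) = p.part (t'.1.min' (hne t')) := by
          rw [← p.mem_part_iff_part_eq_part (Finset.mem_univ _) (Finset.mem_univ _)]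
          exact (key _ _).2 h.symm
        exact Subtype.ext (h1.trans (h3.trans h2.symm))
    refine ⟨⟨p, φ, hφ⟩, ?_⟩
    apply Subtype.ext
    funext b
    exact hself b

end SignedPaper
namespace SignedPaper

open Function Finset

/-- the proper pairs: left colouring injective avoiding the right colours,
right colouring proper for `−K_n`. -/
def ProperPair {m n : ℕ} (C : Finset ℤ) (x : (Fin m → ℤ) × (Fin n → ℤ)) : Prop :=
  ((∀ a, x.1 a ∈ C \ Finset.image x.2 Finset.univ) ∧ Function.Injective x.1) ∧ PropR C x.2

lemma properPair_finite (C : Finset ℤ) (m n : ℕ) :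
    Finite {x : (Fin m → ℤ) × (Fin n → ℤ) // ProperPair C x} := by
  refine Finite.of_injective (fun x =>
    ((fun a => (⟨x.1.1 a, (Finset.mem_sdiff.1 (x.2.1.1 a)).1⟩ : ↥C)),
     (fun b => (⟨x.1.2 b, x.2.2.1 b⟩ : ↥C))) : _ → (Fin m → ↥C) × (Fin n → ↥C)) ?_
  intro x y h
  apply Subtype.ext
  have h1 := congrArg Prod.fst h
  have h2 := congrArg Prod.snd h
  exact Prod.ext (funext fun a => congrArg Subtype.val (congrFun h1 a))
    (funext fun b => congrArg Subtype.val (congrFun h2 b))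

lemma injInto_finite (S : Finset ℤ) (m : ℕ) :
    Finite {f : Fin m → ℤ // (∀ a, f a ∈ S) ∧ Function.Injective f} := by
  refine Finite.of_injective (fun f => (fun a => (⟨f.1 a, f.2.1 a⟩ : ↥S) : Fin m → ↥S)) ?_
  intro f g h
  exact Subtype.ext (funext fun a => congrArg Subtype.val (congrFun h a))

/-- the per-`j` identity, converting nat-subtraction counts to falling factorials. -/
lemma helper_cast (C : Finset ℤ) (h0 : (0:ℤ) ∉ C) (hs : ∀ x ∈ C, -x ∈ C) (j m : ℕ) :
    fallFac2 (C.card : ℤ) j * (((C.card - j : ℕ).descFactorial m : ℕ) : ℤ)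
      = fallFac2 (C.card : ℤ) j * fallFac ((C.card : ℤ) - j) m := by
  rcases le_or_gt j C.card with h | h
  · congr 1
    rw [cast_descFactorial]
    congr 1
    push_cast [h]
    ring
  · have hz : fallFac2 (C.card : ℤ) j = 0 := by
      rw [← card_antip_fin C h0 hs j]
      norm_cast
      have : IsEmpty {φ : Fin j → ℤ // Antip C φ} := by
        refine ⟨fun φ => ?_⟩
        have hsub : Finset.image φ.1 univ ⊆ C := by
          intro c hc
          obtain ⟨i, -, rfl⟩ := Finset.mem_image.1 hc
          exact φ.2.1 i
        have := Finset.card_le_card hsub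
        rw [Finset.card_image_of_injective _ φ.2.2.2, Finset.card_univ, Fintype.card_fin] at this
        omega
      exact Nat.card_of_isEmpty
    rw [hz, zero_mul, zero_mul]

lemma master (m n : ℕ) (C : Finset ℤ) (h0 : (0:ℤ) ∉ C) (hs : ∀ x ∈ C, -x ∈ C) :
    (Nat.card {x : (Fin m → ℤ) × (Fin n → ℤ) // ProperPair C x} : ℤ)
      = ∑ j ∈ Finset.range (n+1),
          (stirling2 n j : ℤ) * fallFac2 (C.card : ℤ) j * fallFac ((C.card : ℤ) - j) m := by
  classical
  haveI : Finite {κ : Fin n → ℤ // PropR C κ} := propR_finite C n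
  haveI : Fintype {κ : Fin n → ℤ // PropR C κ} := Fintype.ofFinite _
  haveI instF : ∀ S : Finset ℤ, Fintype {f : Fin m → ℤ // (∀ a, f a ∈ S) ∧ Function.Injective f} :=
    fun S => @Fintype.ofFinite _ (injInto_finite S m)
  -- Step A : split off the left colouring
  have e1 : {x : (Fin m → ℤ) × (Fin n → ℤ) // ProperPair C x}
      ≃ Σ κR : {κ : Fin n → ℤ // PropR C κ},
          {f : Fin m → ℤ // (∀ a, f a ∈ C \ Finset.image κR.1 Finset.univ) ∧ Function.Injective f} :=
    { toFun := fun x => ⟨⟨x.1.2, x.2.2⟩, ⟨x.1.1, x.2.1⟩⟩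
      invFun := fun y => ⟨(y.2.1, y.1.1), ⟨y.2.2, y.1.2⟩⟩
      left_inv := fun x => rfl
      right_inv := fun y => rfl }
  rw [Nat.card_congr e1, Nat.card_eq_fintype_card, Fintype.card_sigma]
  -- Step A' : compute each fibre
  have hfib : ∀ κR : {κ : Fin n → ℤ // PropR C κ},
      Fintype.card {f : Fin m → ℤ //
          (∀ a, f a ∈ C \ Finset.image κR.1 Finset.univ) ∧ Function.Injective f}
        = (C.card - (Finset.image κR.1 Finset.univ).card).descFactorial m := by
    intro κR
    rw [← Nat.card_eq_fintype_card, card_injInto]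
    congr 1
    rw [Finset.card_sdiff_of_subset]
    intro c hc
    obtain ⟨b, -, rfl⟩ := Finset.mem_image.1 hc
    exact κR.2.1 b
  rw [Finset.sum_congr rfl (fun κR _ => hfib κR)]
  -- Step B : transport along the partition bijection
  haveI instA : ∀ p : Finpartition (univ : Finset (Fin n)),
      Fintype {φ : ↥p.parts → ℤ // Antip C φ} :=
    fun p => @Fintype.ofFinite _ (antip_finite C _)
  have hB := Fintype.sum_bijective _ (Phi_bijective (C := C) (n := n) h0)
    (fun x : Σ p : Finpartition (univ : Finset (Fin n)), {φ : ↥p.parts → ℤ // Antip C φ} =>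
      ((C.card - x.1.parts.card).descFactorial m : ℤ))
    (fun κR : {κ : Fin n → ℤ // PropR C κ} =>
      ((C.card - (Finset.image κR.1 Finset.univ).card).descFactorial m : ℤ))
    (fun x => by dsimp only; rw [Phi_image_card x])
  push_cast
  rw [← hB]
  -- Step C : sum over the sigma type
  rw [← Finset.univ_sigma_univ, Finset.sum_sigma]
  have hinner : ∀ p : Finpartition (univ : Finset (Fin n)),
      ∑ φ : {φ : ↥p.parts → ℤ // Antip C φ},
          ((C.card - p.parts.card).descFactorial m : ℤ)
        = fallFac2 (C.card : ℤ) p.parts.card * fallFac ((C.card : ℤ) - p.parts.card) m := by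
    intro p
    rw [Finset.sum_const, Finset.card_univ, nsmul_eq_mul, ← Nat.card_eq_fintype_card]
    have hc := card_antip C h0 hs (↥p.parts)
    rw [Fintype.card_coe] at hc
    rw [hc]
    exact helper_cast C h0 hs p.parts.card m
  rw [Finset.sum_congr rfl (fun p _ => hinner p)]
  -- Step D : group by the number of parts
  have hmaps : ∀ p : Finpartition (univ : Finset (Fin n)), p ∈ Finset.univ →
      p.parts.card ∈ Finset.range (n+1) := by
    intro p _
    rw [Finset.mem_range, Nat.lt_succ_iff]
    have := p.card_parts_le_card
    rwa [Finset.card_univ, Fintype.card_fin] at this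
  rw [← Finset.sum_fiberwise_of_maps_to hmaps
    (fun p => fallFac2 (C.card : ℤ) p.parts.card * fallFac ((C.card : ℤ) - p.parts.card) m)]
  refine Finset.sum_congr rfl fun j hj => ?_
  have hstir : (stirling2 n j : ℤ)
      = ((Finset.univ.filter fun p : Finpartition (univ : Finset (Fin n)) =>
          p.parts.card = j).card : ℤ) := by
    rw [stirling2, Nat.card_eq_fintype_card, Fintype.card_subtype]
  rw [Finset.sum_congr rfl (fun p hp => by
      rw [(Finset.mem_filter.1 hp).2]),
    Finset.sum_const, nsmul_eq_mul, hstir, mul_assoc]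

end SignedPaper
namespace SignedPaper

open Function Finset

lemma properColourings_iff {m n : ℕ} (C : Finset ℤ) (κ : Fin m ⊕ Fin n → ℤ) :
    κ ∈ ProperColourings (⊤ : SimpleGraph (Fin m ⊕ Fin n)) sig01 C ↔
      ProperPair C (κ ∘ Sum.inl, κ ∘ Sum.inr) := by
  have hσll : ∀ (a a' : Fin m), sig01 (s(Sum.inl a, Sum.inl a') : Sym2 (Fin m ⊕ Fin n)) = 1 := by
    intro a a'; simp [sig01]
  have hσlr : ∀ (a : Fin m) (b : Fin n), sig01 (s(Sum.inl a, Sum.inr b) : Sym2 (Fin m ⊕ Fin n)) = 1 := by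
    intro a b; simp [sig01]
  have hσrl : ∀ (b : Fin n) (a : Fin m), sig01 (s(Sum.inr b, Sum.inl a) : Sym2 (Fin m ⊕ Fin n)) = 1 := by
    intro b a; simp [sig01]
  have hσrr : ∀ (b b' : Fin n), sig01 (s(Sum.inr b, Sum.inr b') : Sym2 (Fin m ⊕ Fin n)) = -1 := by
    intro b b'; simp [sig01]
  constructor
  · rintro ⟨hv, he⟩
    have h_lr : ∀ (a : Fin m) (b : Fin n), κ (Sum.inl a) ≠ κ (Sum.inr b) := by
      intro a b
      have := he (Sum.inl a) (Sum.inr b) (by simp)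
      rwa [hσlr, one_mul] at this
    refine ⟨⟨fun a => ?_, fun a a' h => ?_⟩, fun b => hv _, fun b b' hbb' => ?_⟩
    · refine Finset.mem_sdiff.2 ⟨hv _, fun himg => ?_⟩
      obtain ⟨b, -, hb⟩ := Finset.mem_image.1 himg
      exact h_lr a b hb.symm
    · by_contra hne
      have hadj : (⊤ : SimpleGraph (Fin m ⊕ Fin n)).Adj (Sum.inl a) (Sum.inl a') := by
        simp [hne]
      have := he _ _ hadj
      rw [hσll, one_mul] at this
      exact this h
    · have hadj : (⊤ : SimpleGraph (Fin m ⊕ Fin n)).Adj (Sum.inr b) (Sum.inr b') := by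
        simp [hbb']
      have := he _ _ hadj
      rwa [hσrr, neg_one_mul] at this
  · rintro ⟨⟨hvL, hinjL⟩, hvR, hR⟩
    constructor
    · rintro (a | b)
      · exact (Finset.mem_sdiff.1 (hvL a)).1
      · exact hvR b
    · rintro (a | b) (a' | b') hadj <;> rw [SimpleGraph.top_adj] at hadj
      · rw [hσll, one_mul]
        exact fun h => hadj (congrArg Sum.inl (hinjL h))
      · rw [hσlr, one_mul]
        intro h
        exact (Finset.mem_sdiff.1 (hvL a)).2
          (Finset.mem_image.2 ⟨b', Finset.mem_univ b', h.symm⟩)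
      · rw [hσrl, one_mul]
        intro h
        exact (Finset.mem_sdiff.1 (hvL a')).2
          (Finset.mem_image.2 ⟨b, Finset.mem_univ b, h⟩)
      · rw [hσrr, neg_one_mul]
        exact hR b b' (fun h => hadj (congrArg Sum.inr h))

lemma properCount_eq (m n : ℕ) (C : Finset ℤ) :
    properCount (⊤ : SimpleGraph (Fin m ⊕ Fin n)) sig01 C
      = Nat.card {x : (Fin m → ℤ) × (Fin n → ℤ) // ProperPair C x} := by
  rw [properCount, ← Nat.card_coe_set_eq]
  refine Nat.card_congr
    ⟨fun κ => ⟨(κ.1 ∘ Sum.inl, κ.1 ∘ Sum.inr), (properColourings_iff C κ.1).1 κ.2⟩,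
     fun x => ⟨Sum.elim x.1.1 x.1.2, (properColourings_iff C _).2 x.2⟩, ?_, ?_⟩
  · intro κ
    apply Subtype.ext
    funext v
    cases v <;> rfl
  · intro x
    apply Subtype.ext
    rfl

lemma stirling2_zero : stirling2 0 0 = 1 := by
  rw [stirling2]
  have h1 : ∀ p : Finpartition (univ : Finset (Fin 0)), p.parts.card = 0 := by
    intro p
    have h := p.card_parts_le_card
    simp only [Finset.card_univ, Fintype.card_fin] at h
    omega
  haveI : Subsingleton (Finpartition (univ : Finset (Fin 0))) := by
    constructor
    intro p q
    ext1
    rw [Finset.card_eq_zero.1 (h1 p), Finset.card_eq_zero.1 (h1 q)]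
  haveI : Nonempty (Finpartition (univ : Finset (Fin 0))) := ⟨⊥⟩
  rw [Nat.card_congr (Equiv.subtypeUnivEquiv h1)]
  exact Nat.card_unique

lemma H1_eval (m n : ℕ) (x : ℤ) :
    H1 0 (m : ℤ) (n : ℤ) x
      = ∑ j ∈ Finset.range (n+1), (stirling2 n j : ℤ) * fallFac2 x j * fallFac (x - j) m := by
  rw [H1, if_neg (by omega)]
  simp only [Int.toNat_zero, Int.toNat_natCast, zero_add, Finset.sum_range_one]
  refine Finset.sum_congr rfl fun j hj => ?_
  rw [show (0 ⊓ j) = 0 from Nat.zero_min j]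
  simp only [zero_add, Finset.sum_range_one, Nat.factorial_zero, Nat.choose_self, Nat.choose_zero_right,
    stirling2_zero, Nat.cast_one, one_mul, Nat.sub_zero, Nat.cast_zero, sub_zero]

end SignedPaper
namespace SignedPaper

open Function Finset

lemma colourSet_even_spec (k : ℕ) :
    colourSet (k + k) = (Finset.Icc (-(k:ℤ)) k).erase 0 := by
  rw [colourSet, if_pos ⟨k, rfl⟩]
  have h2 : ((k + k : ℕ) : ℤ) / 2 = (k : ℤ) := by push_cast; omega
  rw [h2]

lemma colourSet_odd_spec (k : ℕ) :
    colourSet (2*k + 1) = Finset.Icc (-(k:ℤ)) k := by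
  rw [colourSet, if_neg (by rintro ⟨r, hr⟩; omega)]
  have h2 : ((2*k + 1 : ℕ) : ℤ) / 2 = (k : ℤ) := by push_cast; omega
  rw [h2]

lemma Icc_erase_facts (k : ℕ) :
    (0:ℤ) ∉ (Finset.Icc (-(k:ℤ)) k).erase 0
    ∧ (∀ x ∈ (Finset.Icc (-(k:ℤ)) k).erase 0, -x ∈ (Finset.Icc (-(k:ℤ)) k).erase 0)
    ∧ ((Finset.Icc (-(k:ℤ)) k).erase 0).card = k + k := by
  refine ⟨Finset.notMem_erase _ _, ?_, ?_⟩
  · intro x hx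
    rw [Finset.mem_erase, Finset.mem_Icc] at hx ⊢
    omega
  · rw [Finset.card_erase_of_mem (by rw [Finset.mem_Icc]; omega), Int.card_Icc]
    omega

lemma nat_card_split {α : Type*} [Finite α] (q : α → Prop) :
    Nat.card α = Nat.card {x // q x} + Nat.card {x // ¬ q x} := by
  classical
  haveI := Fintype.ofFinite α
  rw [Nat.card_eq_fintype_card, Nat.card_eq_fintype_card, Nat.card_eq_fintype_card,
    Fintype.card_subtype, Fintype.card_subtype,
    Finset.card_filter_add_card_filter_not, Finset.card_univ]

lemma odd_decomp (m n : ℕ) (D : Finset ℤ) (h0D : (0:ℤ) ∈ D) :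
    Nat.card {x : (Fin m → ℤ) × (Fin n → ℤ) // ProperPair D x}
      = Nat.card {x : (Fin m → ℤ) × (Fin n → ℤ) // ProperPair (D.erase 0) x}
        + (Nat.card {x : (Fin m → ℤ) × (Fin n → ℤ) // ProperPair D x ∧ ∃ a, x.1 a = 0}
        + Nat.card {x : (Fin m → ℤ) × (Fin n → ℤ) // ProperPair D x ∧ ∃ b, x.2 b = 0}) := by
  classical
  haveI : Finite {x : (Fin m → ℤ) × (Fin n → ℤ) // ProperPair D x} := properPair_finite D m n
  rw [nat_card_split (fun y : {x : (Fin m → ℤ) × (Fin n → ℤ) // ProperPair D x} =>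
    ∃ a, y.1.1 a = 0)]
  haveI : Finite {y : {x : (Fin m → ℤ) × (Fin n → ℤ) // ProperPair D x} //
      ¬ ∃ a, y.1.1 a = 0} := Subtype.finite
  rw [nat_card_split (fun z : {y : {x : (Fin m → ℤ) × (Fin n → ℤ) // ProperPair D x} //
      ¬ ∃ a, y.1.1 a = 0} => ∃ b, z.1.1.2 b = 0)]
  have hiff : ∀ x : (Fin m → ℤ) × (Fin n → ℤ),
      (ProperPair D x ∧ (¬ ∃ a, x.1 a = 0) ∧ (¬ ∃ b, x.2 b = 0))
        ↔ ProperPair (D.erase 0) x := by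
    intro x
    constructor
    · rintro ⟨⟨⟨hvL, hinjL⟩, hvR, hRp⟩, hq1, hq2⟩
      refine ⟨⟨fun a => ?_, hinjL⟩, fun b => ?_, hRp⟩
      · have h1 := Finset.mem_sdiff.1 (hvL a)
        refine Finset.mem_sdiff.2 ⟨Finset.mem_erase.2 ⟨?_, h1.1⟩, h1.2⟩
        exact fun h => hq1 ⟨a, h⟩
      · exact Finset.mem_erase.2 ⟨fun h => hq2 ⟨b, h⟩, hvR b⟩
    · rintro ⟨⟨hvL, hinjL⟩, hvR, hRp⟩
      refine ⟨⟨⟨fun a => ?_, hinjL⟩, fun b => Finset.mem_of_mem_erase (hvR b), hRp⟩, ?_, ?_⟩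
      · have h1 := Finset.mem_sdiff.1 (hvL a)
        exact Finset.mem_sdiff.2 ⟨Finset.mem_of_mem_erase h1.1, h1.2⟩
      · rintro ⟨a, ha⟩
        exact Finset.ne_of_mem_erase (Finset.mem_sdiff.1 (hvL a)).1 ha
      · rintro ⟨b, hb⟩
        exact Finset.ne_of_mem_erase (hvR b) hb
  have e2 : {z : {y : {x : (Fin m → ℤ) × (Fin n → ℤ) // ProperPair D x} //
        ¬ ∃ a, y.1.1 a = 0} // ∃ b, z.1.1.2 b = 0}
      ≃ {x : (Fin m → ℤ) × (Fin n → ℤ) // ProperPair D x ∧ ∃ b, x.2 b = 0} :=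
    { toFun := fun z => ⟨z.1.1.1, z.1.1.2, z.2⟩
      invFun := fun w => ⟨⟨⟨w.1, w.2.1⟩, by
        rintro ⟨a, ha⟩
        obtain ⟨b, hb⟩ := w.2.2
        exact (Finset.mem_sdiff.1 (w.2.1.1.1 a)).2
          (Finset.mem_image.2 ⟨b, Finset.mem_univ b, by rw [hb, ha]⟩)⟩, w.2.2⟩
      left_inv := fun z => rfl
      right_inv := fun w => rfl }
  have e3 : {z : {y : {x : (Fin m → ℤ) × (Fin n → ℤ) // ProperPair D x} //
        ¬ ∃ a, y.1.1 a = 0} // ¬ ∃ b, z.1.1.2 b = 0}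
      ≃ {x : (Fin m → ℤ) × (Fin n → ℤ) // ProperPair (D.erase 0) x} :=
    { toFun := fun z => ⟨z.1.1.1, (hiff _).1 ⟨z.1.1.2, z.1.2, z.2⟩⟩
      invFun := fun w => ⟨⟨⟨w.1, ((hiff _).2 w.2).1⟩, ((hiff _).2 w.2).2.1⟩,
        ((hiff _).2 w.2).2.2⟩
      left_inv := fun z => rfl
      right_inv := fun w => rfl }
  have e1 : {y : {x : (Fin m → ℤ) × (Fin n → ℤ) // ProperPair D x} // ∃ a, y.1.1 a = 0}
      ≃ {x : (Fin m → ℤ) × (Fin n → ℤ) // ProperPair D x ∧ ∃ a, x.1 a = 0} :=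
    { toFun := fun y => ⟨y.1.1, y.1.2, y.2⟩
      invFun := fun w => ⟨⟨w.1, w.2.1⟩, w.2.2⟩
      left_inv := fun y => rfl
      right_inv := fun w => rfl }
  rw [Nat.card_congr e1, Nat.card_congr e2, Nat.card_congr e3]
  ring

end SignedPaper
namespace SignedPaper

open Function Finset

lemma left_zero_count (m n : ℕ) (D : Finset ℤ) (h0D : (0:ℤ) ∈ D) :
    Nat.card {x : (Fin (m+1) → ℤ) × (Fin n → ℤ) // ProperPair D x ∧ ∃ a, x.1 a = 0}
      = (m+1) * Nat.card {x : (Fin m → ℤ) × (Fin n → ℤ) // ProperPair (D.erase 0) x} := by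
  have hmap : ∀ (a₀ : Fin (m+1)) (y : {x : (Fin m → ℤ) × (Fin n → ℤ) //
      ProperPair (D.erase 0) x}),
      ProperPair D ((a₀.insertNth (0:ℤ) y.1.1 : Fin (m+1) → ℤ), y.1.2)
        ∧ ∃ a, (a₀.insertNth (0:ℤ) y.1.1 : Fin (m+1) → ℤ) a = 0 := by
    rintro a₀ ⟨⟨κL, κR⟩, ⟨hvL, hinjL⟩, hvR, hRp⟩
    dsimp only at hvL hinjL hvR hRp
    have hsame : (a₀.insertNth (0:ℤ) κL : Fin (m+1) → ℤ) a₀ = 0 := by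
      rw [Fin.insertNth_apply_same]
    have hv : ∀ a : Fin (m+1),
        (a₀.insertNth (0:ℤ) κL : Fin (m+1) → ℤ) a ∈ D \ Finset.image κR Finset.univ := by
      intro a
      rcases eq_or_ne a a₀ with h1 | h1
      · rw [h1, Fin.insertNth_apply_same]
        refine Finset.mem_sdiff.2 ⟨h0D, fun him => ?_⟩
        obtain ⟨b, -, hb⟩ := Finset.mem_image.1 him
        exact Finset.ne_of_mem_erase (hvR b) hb
      · obtain ⟨j, hj⟩ := Fin.exists_succAbove_eq h1
        rw [← hj, Fin.insertNth_apply_succAbove]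
        have h2 := Finset.mem_sdiff.1 (hvL j)
        exact Finset.mem_sdiff.2 ⟨Finset.mem_of_mem_erase h2.1, h2.2⟩
    have hinj : Function.Injective (a₀.insertNth (0:ℤ) κL : Fin (m+1) → ℤ) := by
      intro a a' h
      rcases eq_or_ne a a₀ with h1 | h1 <;> rcases eq_or_ne a' a₀ with h2 | h2
      · rw [h1, h2]
      · obtain ⟨j, hj⟩ := Fin.exists_succAbove_eq h2
        rw [h1, ← hj, Fin.insertNth_apply_same, Fin.insertNth_apply_succAbove] at h
        exact absurd h.symm (Finset.ne_of_mem_erase (Finset.mem_sdiff.1 (hvL j)).1)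
      · obtain ⟨j, hj⟩ := Fin.exists_succAbove_eq h1
        rw [h2, ← hj, Fin.insertNth_apply_same, Fin.insertNth_apply_succAbove] at h
        exact absurd h (Finset.ne_of_mem_erase (Finset.mem_sdiff.1 (hvL j)).1)
      · obtain ⟨j, hj⟩ := Fin.exists_succAbove_eq h1
        obtain ⟨j', hj'⟩ := Fin.exists_succAbove_eq h2
        rw [← hj, ← hj', Fin.insertNth_apply_succAbove, Fin.insertNth_apply_succAbove] at h
        rw [← hj, ← hj']
        exact congrArg a₀.succAbove (hinjL h)
    exact ⟨⟨⟨hv, hinj⟩, fun b => Finset.mem_of_mem_erase (hvR b), hRp⟩, a₀, hsame⟩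
  have hbij : Function.Bijective (fun w : Fin (m+1) × {x : (Fin m → ℤ) × (Fin n → ℤ) //
      ProperPair (D.erase 0) x} =>
      (⟨(w.1.insertNth (0:ℤ) w.2.1.1, w.2.1.2), hmap w.1 w.2⟩ :
        {x : (Fin (m+1) → ℤ) × (Fin n → ℤ) // ProperPair D x ∧ ∃ a, x.1 a = 0})) := by
    constructor
    · rintro ⟨a₀, ⟨⟨κL, κR⟩, hy⟩⟩ ⟨a₁, ⟨⟨κL', κR'⟩, hy'⟩⟩ h
      have hpair := congrArg Subtype.val h
      have hL : (a₀.insertNth (0:ℤ) κL : Fin (m+1) → ℤ)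
          = (a₁.insertNth (0:ℤ) κL' : Fin (m+1) → ℤ) := by
        exact congrArg Prod.fst hpair
      have hRe : κR = κR' := by exact congrArg Prod.snd hpair
      have hvL' := hy'.1.1
      have ha : a₀ = a₁ := by
        by_contra hne
        obtain ⟨j, hj⟩ := Fin.exists_succAbove_eq hne
        have h1 := congrFun hL a₀
        rw [Fin.insertNth_apply_same, ← hj, Fin.insertNth_apply_succAbove] at h1
        exact Finset.ne_of_mem_erase (Finset.mem_sdiff.1 (hvL' j)).1 h1.symm
      subst ha
      have hLf : κL = κL' := by
        funext j
        have h2 := congrFun hL (a₀.succAbove j)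
        rwa [Fin.insertNth_apply_succAbove, Fin.insertNth_apply_succAbove] at h2
      subst hLf
      subst hRe
      exact Prod.ext rfl (Subtype.ext rfl)
    · rintro ⟨⟨f, g⟩, ⟨⟨hvf, hinjf⟩, hvg, hgp⟩, a₀, ha₀⟩
      dsimp only at hvf hinjf hvg hgp ha₀
      have hprop : ProperPair (D.erase 0) (f ∘ a₀.succAbove, g) := by
        refine ⟨⟨?_, ?_⟩, ?_, hgp⟩
        · intro j
          have h1 := Finset.mem_sdiff.1 (hvf (a₀.succAbove j))
          refine Finset.mem_sdiff.2 ⟨Finset.mem_erase.2 ⟨?_, h1.1⟩, h1.2⟩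
          intro h
          exact Fin.succAbove_ne a₀ j (hinjf (h.trans ha₀.symm))
        · exact fun j j' h => Fin.succAbove_right_injective (hinjf h)
        · intro b
          refine Finset.mem_erase.2 ⟨?_, hvg b⟩
          intro h
          have h' : g b = 0 := h
          exact (Finset.mem_sdiff.1 (hvf a₀)).2
            (Finset.mem_image.2 ⟨b, Finset.mem_univ b, by rw [h', ← ha₀]⟩)
      refine ⟨⟨a₀, ⟨(f ∘ a₀.succAbove, g), hprop⟩⟩, ?_⟩
      apply Subtype.ext
      refine Prod.ext ?_ rfl
      show (a₀.insertNth (0:ℤ) (f ∘ a₀.succAbove) : Fin (m+1) → ℤ) = f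
      funext a
      rcases eq_or_ne a a₀ with h1 | h1
      · rw [h1, Fin.insertNth_apply_same]
        exact ha₀.symm
      · obtain ⟨j, hj⟩ := Fin.exists_succAbove_eq h1
        rw [← hj, Fin.insertNth_apply_succAbove]
        rfl
  rw [← Nat.card_eq_of_bijective _ hbij, Nat.card_prod, Nat.card_eq_fintype_card,
    Fintype.card_fin]

lemma right_zero_count (m n : ℕ) (D : Finset ℤ) (h0D : (0:ℤ) ∈ D) :
    Nat.card {x : (Fin m → ℤ) × (Fin (n+1) → ℤ) // ProperPair D x ∧ ∃ b, x.2 b = 0}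
      = (n+1) * Nat.card {x : (Fin m → ℤ) × (Fin n → ℤ) // ProperPair (D.erase 0) x} := by
  have hmap : ∀ (b₀ : Fin (n+1)) (y : {x : (Fin m → ℤ) × (Fin n → ℤ) //
      ProperPair (D.erase 0) x}),
      ProperPair D (y.1.1, (b₀.insertNth (0:ℤ) y.1.2 : Fin (n+1) → ℤ))
        ∧ ∃ b, (b₀.insertNth (0:ℤ) y.1.2 : Fin (n+1) → ℤ) b = 0 := by
    rintro b₀ ⟨⟨κL, κR⟩, ⟨hvL, hinjL⟩, hvR, hRp⟩
    dsimp only at hvL hinjL hvR hRp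
    have hsame : (b₀.insertNth (0:ℤ) κR : Fin (n+1) → ℤ) b₀ = 0 := by
      rw [Fin.insertNth_apply_same]
    have hv : ∀ a : Fin m,
        κL a ∈ D \ Finset.image (b₀.insertNth (0:ℤ) κR : Fin (n+1) → ℤ) Finset.univ := by
      intro a
      have h1 := Finset.mem_sdiff.1 (hvL a)
      refine Finset.mem_sdiff.2 ⟨Finset.mem_of_mem_erase h1.1, fun him => ?_⟩
      obtain ⟨b, -, hb⟩ := Finset.mem_image.1 him
      rcases eq_or_ne b b₀ with h2 | h2
      · rw [h2, Fin.insertNth_apply_same] at hb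
        exact Finset.ne_of_mem_erase h1.1 hb.symm
      · obtain ⟨j, hj⟩ := Fin.exists_succAbove_eq h2
        rw [← hj, Fin.insertNth_apply_succAbove] at hb
        exact h1.2 (Finset.mem_image.2 ⟨j, Finset.mem_univ j, hb⟩)
    have hvR' : ∀ b : Fin (n+1), (b₀.insertNth (0:ℤ) κR : Fin (n+1) → ℤ) b ∈ D := by
      intro b
      rcases eq_or_ne b b₀ with h2 | h2
      · rw [h2, Fin.insertNth_apply_same]; exact h0D
      · obtain ⟨j, hj⟩ := Fin.exists_succAbove_eq h2
        rw [← hj, Fin.insertNth_apply_succAbove]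
        exact Finset.mem_of_mem_erase (hvR j)
    have hpair' : ∀ b b' : Fin (n+1), b ≠ b' →
        (b₀.insertNth (0:ℤ) κR : Fin (n+1) → ℤ) b
          ≠ -(b₀.insertNth (0:ℤ) κR : Fin (n+1) → ℤ) b' := by
      intro b b' hbb'
      rcases eq_or_ne b b₀ with h2 | h2 <;> rcases eq_or_ne b' b₀ with h3 | h3
      · exact absurd (h2.trans h3.symm) hbb'
      · obtain ⟨j, hj⟩ := Fin.exists_succAbove_eq h3
        rw [h2, ← hj, Fin.insertNth_apply_same, Fin.insertNth_apply_succAbove]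
        intro h
        exact Finset.ne_of_mem_erase (hvR j) (by omega)
      · obtain ⟨j, hj⟩ := Fin.exists_succAbove_eq h2
        rw [h3, ← hj, Fin.insertNth_apply_same, Fin.insertNth_apply_succAbove]
        intro h
        exact Finset.ne_of_mem_erase (hvR j) (by omega)
      · obtain ⟨j, hj⟩ := Fin.exists_succAbove_eq h2
        obtain ⟨j', hj'⟩ := Fin.exists_succAbove_eq h3
        rw [← hj, ← hj', Fin.insertNth_apply_succAbove, Fin.insertNth_apply_succAbove]
        refine hRp j j' (fun h => hbb' ?_)
        rw [← hj, ← hj', h]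
    exact ⟨⟨⟨hv, hinjL⟩, hvR', hpair'⟩, b₀, hsame⟩
  have hbij : Function.Bijective (fun w : Fin (n+1) × {x : (Fin m → ℤ) × (Fin n → ℤ) //
      ProperPair (D.erase 0) x} =>
      (⟨(w.2.1.1, w.1.insertNth (0:ℤ) w.2.1.2), hmap w.1 w.2⟩ :
        {x : (Fin m → ℤ) × (Fin (n+1) → ℤ) // ProperPair D x ∧ ∃ b, x.2 b = 0})) := by
    constructor
    · rintro ⟨b₀, ⟨⟨κL, κR⟩, hy⟩⟩ ⟨b₁, ⟨⟨κL', κR'⟩, hy'⟩⟩ h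
      have hpair := congrArg Subtype.val h
      have hLe : κL = κL' := by exact congrArg Prod.fst hpair
      have hRe : (b₀.insertNth (0:ℤ) κR : Fin (n+1) → ℤ)
          = (b₁.insertNth (0:ℤ) κR' : Fin (n+1) → ℤ) := by
        exact congrArg Prod.snd hpair
      have hvR' := hy'.2.1
      have hb : b₀ = b₁ := by
        by_contra hne
        obtain ⟨j, hj⟩ := Fin.exists_succAbove_eq hne
        have h1 := congrFun hRe b₀
        rw [Fin.insertNth_apply_same, ← hj, Fin.insertNth_apply_succAbove] at h1
        exact Finset.ne_of_mem_erase (hvR' j) h1.symm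
      subst hb
      have hRf : κR = κR' := by
        funext j
        have h2 := congrFun hRe (b₀.succAbove j)
        rwa [Fin.insertNth_apply_succAbove, Fin.insertNth_apply_succAbove] at h2
      subst hRf
      subst hLe
      exact Prod.ext rfl (Subtype.ext rfl)
    · rintro ⟨⟨f, g⟩, ⟨⟨hvf, hinjf⟩, hvg, hgp⟩, b₀, hb₀⟩
      dsimp only at hvf hinjf hvg hgp hb₀
      have hprop : ProperPair (D.erase 0) (f, g ∘ b₀.succAbove) := by
        refine ⟨⟨?_, hinjf⟩, ?_, ?_⟩
        · intro a
          have h1 := Finset.mem_sdiff.1 (hvf a)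
          have hfa0 : f a ≠ 0 := by
            intro h
            exact h1.2 (Finset.mem_image.2 ⟨b₀, Finset.mem_univ b₀, by rw [hb₀, h]⟩)
          refine Finset.mem_sdiff.2 ⟨Finset.mem_erase.2 ⟨hfa0, h1.1⟩, fun him => ?_⟩
          obtain ⟨j, -, hj⟩ := Finset.mem_image.1 him
          exact h1.2 (Finset.mem_image.2 ⟨b₀.succAbove j, Finset.mem_univ _, hj⟩)
        · intro j
          refine Finset.mem_erase.2 ⟨?_, hvg _⟩
          intro h
          have h' : g (b₀.succAbove j) = 0 := h
          have h2 := hgp (b₀.succAbove j) b₀ (Fin.succAbove_ne b₀ j)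
          rw [h', hb₀] at h2
          exact h2 (by ring)
        · exact fun j j' hjj' => hgp _ _ (fun h => hjj' (Fin.succAbove_right_injective h))
      refine ⟨⟨b₀, ⟨(f, g ∘ b₀.succAbove), hprop⟩⟩, ?_⟩
      apply Subtype.ext
      refine Prod.ext rfl ?_
      show (b₀.insertNth (0:ℤ) (g ∘ b₀.succAbove) : Fin (n+1) → ℤ) = g
      funext b
      rcases eq_or_ne b b₀ with h1 | h1
      · rw [h1, Fin.insertNth_apply_same]
        exact hb₀.symm
      · obtain ⟨j, hj⟩ := Fin.exists_succAbove_eq h1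
        rw [← hj, Fin.insertNth_apply_succAbove]
        rfl
  rw [← Nat.card_eq_of_bijective _ hbij, Nat.card_prod, Nat.card_eq_fintype_card,
    Fintype.card_fin]

end SignedPaper
open SignedPaper Finset in
/-- the chromatic polynomials of `(+K_m) ∨₊ (−K_n)`. -/
theorem stmt_7 (m n : ℕ) :
    (∀ lam : ℕ, Even lam →
      (signedCount (⊤ : SimpleGraph (Fin m ⊕ Fin n)) sig01 lam : ℤ) =
        H1 0 (m : ℤ) (n : ℤ) (lam : ℤ) ∧
      (signedCount (⊤ : SimpleGraph (Fin m ⊕ Fin n)) sig01 lam : ℤ) =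
        ∑ j ∈ Finset.range (n + 1),
          (stirling2 n j : ℤ) * fallFac2 (lam : ℤ) j * fallFac ((lam : ℤ) - j) m) ∧
    (∀ lam : ℕ, Odd lam →
      (signedCount (⊤ : SimpleGraph (Fin m ⊕ Fin n)) sig01 lam : ℤ) =
        H1 0 (m : ℤ) (n : ℤ) ((lam : ℤ) - 1) +
          (m : ℤ) * H1 0 ((m : ℤ) - 1) (n : ℤ) ((lam : ℤ) - 1) +
          (n : ℤ) * H1 0 (m : ℤ) ((n : ℤ) - 1) ((lam : ℤ) - 1)) := by
  constructor
  · intro lam hl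
    obtain ⟨k, rfl⟩ := hl
    have hC := Icc_erase_facts k
    have hcount : (signedCount (⊤ : SimpleGraph (Fin m ⊕ Fin n)) sig01 (k+k) : ℤ)
        = ∑ j ∈ Finset.range (n+1), (stirling2 n j : ℤ) * fallFac2 ((k+k : ℕ) : ℤ) j
            * fallFac (((k+k : ℕ) : ℤ) - j) m := by
      rw [signedCount, properCount_eq, colourSet_even_spec,
        master m n _ hC.1 hC.2.1, hC.2.2]
    exact ⟨by rw [hcount, H1_eval], hcount⟩
  · intro lam hl
    obtain ⟨k, rfl⟩ := hl
    have hC := Icc_erase_facts k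
    have h0D : (0:ℤ) ∈ Finset.Icc (-(k:ℤ)) k := by
      rw [Finset.mem_Icc]
      omega
    have hx : ((k+k : ℕ) : ℤ) = ((2*k+1 : ℕ) : ℤ) - 1 := by push_cast; ring
    have hmaster : ∀ m' n' : ℕ,
        (Nat.card {x : (Fin m' → ℤ) × (Fin n' → ℤ) //
          ProperPair ((Finset.Icc (-(k:ℤ)) k).erase 0) x} : ℤ)
        = H1 0 (m' : ℤ) (n' : ℤ) (((2*k+1 : ℕ) : ℤ) - 1) := by
      intro m' n'
      rw [master m' n' _ hC.1 hC.2.1, hC.2.2, hx, H1_eval]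
    rw [signedCount, properCount_eq, colourSet_odd_spec, odd_decomp m n _ h0D]
    have hB : (Nat.card {x : (Fin m → ℤ) × (Fin n → ℤ) //
        ProperPair (Finset.Icc (-(k:ℤ)) k) x ∧ ∃ a, x.1 a = 0} : ℤ)
        = (m : ℤ) * H1 0 ((m : ℤ) - 1) (n : ℤ) (((2*k+1 : ℕ) : ℤ) - 1) := by
      rcases m with _ | m'
      · haveI : IsEmpty {x : (Fin 0 → ℤ) × (Fin n → ℤ) //
            ProperPair (Finset.Icc (-(k:ℤ)) k) x ∧ ∃ a, x.1 a = 0} :=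
          ⟨fun x => Fin.elim0 x.2.2.choose⟩
        rw [Nat.card_of_isEmpty]
        simp
      · rw [left_zero_count m' n _ h0D, Nat.cast_mul, hmaster m' n]
        have h1 : ((m'+1 : ℕ) : ℤ) - 1 = (m' : ℤ) := by push_cast; ring
        rw [← h1]
    have hCc : (Nat.card {x : (Fin m → ℤ) × (Fin n → ℤ) //
        ProperPair (Finset.Icc (-(k:ℤ)) k) x ∧ ∃ b, x.2 b = 0} : ℤ)
        = (n : ℤ) * H1 0 (m : ℤ) ((n : ℤ) - 1) (((2*k+1 : ℕ) : ℤ) - 1) := by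
      rcases n with _ | n'
      · haveI : IsEmpty {x : (Fin m → ℤ) × (Fin 0 → ℤ) //
            ProperPair (Finset.Icc (-(k:ℤ)) k) x ∧ ∃ b, x.2 b = 0} :=
          ⟨fun x => Fin.elim0 x.2.2.choose⟩
        rw [Nat.card_of_isEmpty]
        simp
      · rw [right_zero_count m n' _ h0D, Nat.cast_mul, hmaster m n']
        have h1 : ((n'+1 : ℕ) : ℤ) - 1 = (n' : ℤ) := by push_cast; ring
        rw [← h1]
    rw [Nat.cast_add, Nat.cast_add, hmaster m n, hB, hCc]
    ring
end

section
/- For every integer n ≥ 0, the identity (x)_n = Σ_{j=0}^{⌊n/2⌋} T(n,j)·₂(x)_{n−j} holds in ℤ[x], where T(n,j) = (n)_{2j}/(2^j·j!). -/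
open Finset

namespace Stmt11Aux

open SignedPaper Polynomial

/-- Recursive version of the matching numbers. -/
def M : ℕ → ℕ → ℕ
  | _, 0 => 1
  | 0, _+1 => 0
  | n+1, k+1 => M n (k+1) + (n - 2*k) * M n k

lemma descFac_rec (n k : ℕ) :
    (n+1).descFactorial (2*(k+1)) =
      n.descFactorial (2*(k+1)) + 2*(k+1)*((n - 2*k) * n.descFactorial (2*k)) := by
  have h1 : 2*(k+1) = 2*k+1+1 := by ring
  rw [h1, Nat.succ_descFactorial_succ, Nat.descFactorial_succ, Nat.descFactorial_succ,
    Nat.descFactorial_succ]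
  rcases le_or_gt n (2*k) with h | h
  · have h0 : n - 2*k = 0 := by omega
    simp [h0]
  · have h2 : n - (2*k+1) + 2*(k+1) = n + 1 := by omega
    rw [← h2]; ring

lemma key (n : ℕ) : ∀ k, 2^k * k.factorial * M n k = n.descFactorial (2*k) := by
  induction n with
  | zero =>
    intro k
    cases k with
    | zero => simp [M]
    | succ k =>
      have h1 : 2*(k+1) = 2*k+1+1 := by ring
      rw [h1, Nat.zero_descFactorial_succ]
      simp [M]
  | succ n ih =>
    intro k
    cases k with
    | zero => simp [M]
    | succ k =>
      have e1 := ih (k+1)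
      have e2 := ih k
      calc 2^(k+1) * (k+1).factorial * M (n+1) (k+1)
          = 2^(k+1) * (k+1).factorial * M n (k+1)
              + 2*(k+1)*((n-2*k) * (2^k * k.factorial * M n k)) := by
            show 2^(k+1) * (k+1).factorial * (M n (k+1) + (n-2*k) * M n k) = _
            rw [Nat.factorial_succ, pow_succ]; ring
        _ = n.descFactorial (2*(k+1)) + 2*(k+1)*((n-2*k) * n.descFactorial (2*k)) := by
            rw [e1, e2]
        _ = (n+1).descFactorial (2*(k+1)) := (descFac_rec n k).symm

lemma matchNum_eq_M (n k : ℕ) : matchNum n k = M n k := by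
  unfold matchNum
  rw [← key n k, Nat.mul_div_cancel_left _ (by positivity)]

lemma matchNum_eq_zero {n k : ℕ} (h : n < 2*k) : matchNum n k = 0 := by
  unfold matchNum
  rw [Nat.descFactorial_eq_zero_iff_lt.2 h]
  simp

lemma matchNum_zero (n : ℕ) : matchNum n 0 = 1 := by
  rw [matchNum_eq_M]; cases n <;> rfl

lemma matchNum_rec (n k : ℕ) :
    matchNum (n+1) (k+1) = matchNum n (k+1) + (n - 2*k) * matchNum n k := by
  rw [matchNum_eq_M, matchNum_eq_M, matchNum_eq_M]; rfl

lemma cast_rec (n j : ℕ) :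
    ((matchNum (n+1) (j+1) : ℤ)) =
      (matchNum n (j+1) : ℤ) + ((n:ℤ) - 2*j) * (matchNum n j : ℤ) := by
  rw [matchNum_rec]
  rcases le_or_gt (2*j) n with h | h
  · push_cast [Nat.cast_sub h]; ring
  · have h0 : n - 2*j = 0 := by omega
    rw [matchNum_eq_zero h, h0]
    push_cast; ring

/-- The identity over the full range `range (n+1)`. -/
lemma full (n : ℕ) :
    (∏ j ∈ Finset.range n, (X - C (j : ℤ))) =
      ∑ j ∈ Finset.range (n+1), C (matchNum n j : ℤ) *
        ∏ i ∈ Finset.range (n - j), (X - C (2 * (i : ℤ))) := by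
  induction n with
  | zero => simp [matchNum_zero]
  | succ n ih =>
    rw [prod_range_succ, ih, sum_mul]
    have hstep : ∀ j ∈ Finset.range (n+1),
        (C (matchNum n j : ℤ) * ∏ i ∈ Finset.range (n-j), (X - C (2*(i:ℤ)))) * (X - C (n:ℤ))
        = C (matchNum n j : ℤ) * ∏ i ∈ Finset.range (n-j+1), (X - C (2*(i:ℤ)))
          + C (matchNum n j : ℤ) * C ((n:ℤ) - 2*j) * ∏ i ∈ Finset.range (n-j), (X - C (2*(i:ℤ))) := by
      intro j hj
      have hj' : j ≤ n := Nat.lt_succ_iff.mp (mem_range.mp hj)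
      rw [prod_range_succ]
      have hcast : (2 * ((n-j : ℕ) : ℤ)) = 2*(n:ℤ) - 2*(j:ℤ) := by
        rw [Nat.cast_sub hj']; ring
      simp only [hcast, map_sub, map_mul, map_ofNat]
      ring
    rw [sum_congr rfl hstep, sum_add_distrib]
    -- Let A j = C(T n j) * G(n-j+1), A' j = C(T n (j+1)) * G(n-j),
    -- B j = C(T n j)*C(n-2j)*G(n-j), G m = ∏ i<m, (X - C(2i)).
    have hA : (∑ j ∈ Finset.range (n+1),
          C (matchNum n j : ℤ) * ∏ i ∈ Finset.range (n-j+1), (X - C (2*(i:ℤ))))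
        = (∑ j ∈ Finset.range n,
            C (matchNum n (j+1) : ℤ) * ∏ i ∈ Finset.range (n-j), (X - C (2*(i:ℤ))))
          + ∏ i ∈ Finset.range (n+1), (X - C (2*(i:ℤ))) := by
      rw [Finset.sum_range_succ']
      congr 1
      · refine Finset.sum_congr rfl fun j hj => ?_
        have hj' : j < n := mem_range.mp hj
        have : n - (j+1) + 1 = n - j := by omega
        rw [this]
      · rw [matchNum_zero]
        simp
    rw [hA]
    -- extend the first sum to range (n+1); the extra term vanishes
    have hext : (∑ j ∈ Finset.range n,
          C (matchNum n (j+1) : ℤ) * ∏ i ∈ Finset.range (n-j), (X - C (2*(i:ℤ))))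
        = ∑ j ∈ Finset.range (n+1),
            C (matchNum n (j+1) : ℤ) * ∏ i ∈ Finset.range (n-j), (X - C (2*(i:ℤ))) := by
      rw [Finset.sum_range_succ, matchNum_eq_zero (by omega : n < 2*(n+1))]
      simp
    rw [hext]
    -- now handle the RHS
    rw [Finset.sum_range_succ' _ (n+1)]
    have hR : ∀ j ∈ Finset.range (n+1),
        C (matchNum (n+1) (j+1) : ℤ) * ∏ i ∈ Finset.range (n+1-(j+1)), (X - C (2*(i:ℤ)))
        = C (matchNum n (j+1) : ℤ) * ∏ i ∈ Finset.range (n-j), (X - C (2*(i:ℤ)))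
          + C (matchNum n j : ℤ) * C ((n:ℤ) - 2*j) * ∏ i ∈ Finset.range (n-j), (X - C (2*(i:ℤ))) := by
      intro j hj
      have h1 : n+1-(j+1) = n - j := by omega
      rw [h1, cast_rec, map_add]
      rw [map_mul]
      ring
    rw [sum_congr rfl hR, sum_add_distrib, matchNum_zero]
    have h2 : n + 1 - 0 = n + 1 := rfl
    rw [h2]
    simp only [Nat.cast_one, map_one]
    ring

end Stmt11Aux

open SignedPaper Polynomial in
/-- `(x)_n = Σ_{j=0}^{⌊n/2⌋} T(n,j) · ₂(x)_{n−j}` in `ℤ[x]`. -/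
theorem stmt_11 (n : ℕ) :
    (∏ j ∈ Finset.range n, (Polynomial.X - Polynomial.C (j : ℤ))) =
      ∑ j ∈ Finset.range (n / 2 + 1), Polynomial.C (matchNum n j : ℤ) *
        ∏ i ∈ Finset.range (n - j), (Polynomial.X - Polynomial.C (2 * (i : ℤ))) := by
  rw [Stmt11Aux.full n]
  refine (Finset.sum_subset (Finset.range_subset_range.2 (by omega)) fun x hx hnx => ?_).symm
  have hxn : n < 2 * x := by
    have h1 := Finset.mem_range.mp hx
    have h2 : ¬ x < n / 2 + 1 := fun h => hnx (Finset.mem_range.mpr h)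
    omega
  rw [Stmt11Aux.matchNum_eq_zero hxn]
  simp
end
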